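/- arXiv:2406.15180 — 6 statements merged into one kernel-verified Lean document; each statement's English description precedes it below -/
import Mathlib

section
/- Let p ≥ 1 and let N be a p-supermodular monotone norm on ℝⁿ. Let T ≥ 1 and let v_1,…,v_T and v*_1,…,v*_T be vectors in ℝⁿ with nonnegative coordinates; set Λ_t = v_1+…+v_t and Λ*_t = v*_1+…+v*_t (with Λ_0 = Λ*_0 = 0). Assume the greedy property: N(Λ_{t−1}+v_t) ≤ N(Λ_{t−1}+v*_t) for every t ∈ {1,…,T}. Then N(Λ_T) ≤ (2^{1/p} − 1)^{−1} · N(Λ*_T). -/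
noncomputable section

/-- A monotone norm on ℝⁿ: subadditive, absolutely homogeneous, point-separating, and
monotone on the nonnegative orthant. -/
def IsMonotoneNorm {n : ℕ} (N : (Fin n → ℝ) → ℝ) : Prop :=
  (∀ x y, N (x + y) ≤ N x + N y) ∧
  (∀ (c : ℝ) (x), N (c • x) = |c| * N x) ∧
  (∀ x, N x = 0 → x = 0) ∧
  (∀ x y : Fin n → ℝ, 0 ≤ x → x ≤ y → N x ≤ N y)

/-- `N` is `p`-supermodular: `N(u+v+w)^p − N(u+v)^p ≥ N(u+w)^p − N(u)^p` for all
nonnegative `u, v, w`. -/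
def IsPSupermodular {n : ℕ} (N : (Fin n → ℝ) → ℝ) (p : ℝ) : Prop :=
  ∀ u v w : Fin n → ℝ, 0 ≤ u → 0 ≤ v → 0 ≤ w →
    N (u + w) ^ p - N u ^ p ≤ N (u + v + w) ^ p - N (u + v) ^ p

/-- The greedy algorithm for Online Load-Balancing with a `p`-supermodular monotone norm
objective: if at every step `t` the increase of the norm using `v t` is no larger than
using the optimum's vector `vstar t`, then the final load `N(Λ_T)` is at most
`(2^{1/p} − 1)⁻¹ · N(Λ*_T)`. -/
theorem greedy_loadBalancing {n : ℕ} (p : ℝ) (hp : 1 ≤ p)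
    (N : (Fin n → ℝ) → ℝ) (hN : IsMonotoneNorm N) (hsup : IsPSupermodular N p)
    (T : ℕ) (hT : 1 ≤ T) (v vstar : ℕ → (Fin n → ℝ))
    (hv : ∀ t < T, 0 ≤ v t) (hvstar : ∀ t < T, 0 ≤ vstar t)
    (greedy : ∀ t < T,
      N ((∑ s ∈ Finset.range t, v s) + v t) ≤ N ((∑ s ∈ Finset.range t, v s) + vstar t)) :
    N (∑ s ∈ Finset.range T, v s) ≤
      ((2 : ℝ) ^ (1 / p) - 1)⁻¹ * N (∑ s ∈ Finset.range T, vstar s) := by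
  obtain ⟨hadd, hhom, -, hmono⟩ := hN
  have hp0 : 0 < p := lt_of_lt_of_le one_pos hp
  have hN0 : N 0 = 0 := by simpa using hhom 0 0
  have hNnn : ∀ x : Fin n → ℝ, 0 ≤ x → 0 ≤ N x := fun x hx => hN0 ▸ hmono 0 x le_rfl hx
  set Λ : ℕ → (Fin n → ℝ) := fun t => ∑ s ∈ Finset.range t, v s with hΛ
  set Λs : ℕ → (Fin n → ℝ) := fun t => ∑ s ∈ Finset.range t, vstar s with hΛs
  have hΛnn : ∀ t, t ≤ T → 0 ≤ Λ t := fun t ht =>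
    Finset.sum_nonneg fun s hs => hv s (lt_of_lt_of_le (Finset.mem_range.mp hs) ht)
  have hΛsnn : ∀ t, t ≤ T → 0 ≤ Λs t := fun t ht =>
    Finset.sum_nonneg fun s hs => hvstar s (lt_of_lt_of_le (Finset.mem_range.mp hs) ht)
  have key : ∀ t ∈ Finset.range T,
      N (Λ (t+1)) ^ p - N (Λ t) ^ p ≤ N (Λ T + Λs (t+1)) ^ p - N (Λ T + Λs t) ^ p := by
    intro t htm
    have ht : t < T := Finset.mem_range.mp htm
    have h1 : N (Λ (t+1)) ≤ N (Λ t + vstar t) := by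
      have := greedy t ht
      simpa [hΛ, Finset.sum_range_succ] using this
    have h1p : N (Λ (t+1)) ^ p ≤ N (Λ t + vstar t) ^ p :=
      Real.rpow_le_rpow (hNnn _ (hΛnn (t+1) ht)) h1 hp0.le
    have hIco : (0 : Fin n → ℝ) ≤ (∑ s ∈ Finset.Ico t T, v s) :=
      Finset.sum_nonneg fun s hs => hv s (Finset.mem_Ico.mp hs).2
    have h2 := hsup (Λ t) ((∑ s ∈ Finset.Ico t T, v s) + Λs t) (vstar t)
      (hΛnn t ht.le) (add_nonneg hIco (hΛsnn t ht.le)) (hvstar t ht)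
    have e1 : Λ t + ((∑ s ∈ Finset.Ico t T, v s) + Λs t) = Λ T + Λs t := by
      rw [← add_assoc, hΛ]
      simp [Finset.sum_range_add_sum_Ico _ ht.le]
    have e2 : Λ T + Λs (t+1) = Λ T + Λs t + vstar t := by
      rw [hΛs, add_assoc]
      simp [Finset.sum_range_succ]
    rw [e1] at h2
    rw [e2]
    linarith
  have tsum := Finset.sum_le_sum key
  rw [Finset.sum_range_sub (fun t => N (Λ t) ^ p),
      Finset.sum_range_sub (fun t => N (Λ T + Λs t) ^ p)] at tsum
  have hΛ0 : Λ 0 = 0 := by simp [hΛ]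
  have hΛs0 : Λs 0 = 0 := by simp [hΛs]
  rw [hΛ0, hΛs0, hN0, add_zero] at tsum
  have h0p : (0:ℝ) ^ p = 0 := Real.zero_rpow hp0.ne'
  rw [h0p] at tsum
  set A := N (Λ T) with hA
  set B := N (Λs T) with hB
  have hA0 : 0 ≤ A := hNnn _ (hΛnn T le_rfl)
  have hB0 : 0 ≤ B := hNnn _ (hΛsnn T le_rfl)
  have hsub : N (Λ T + Λs T) ≤ A + B := hadd _ _
  have hsubp : N (Λ T + Λs T) ^ p ≤ (A + B) ^ p :=
    Real.rpow_le_rpow (hNnn _ (add_nonneg (hΛnn T le_rfl) (hΛsnn T le_rfl))) hsub hp0.le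
  have h3 : 2 * A ^ p ≤ (A + B) ^ p := by linarith
  have h4 : (2:ℝ) ^ (1/p) * A ≤ A + B := by
    have l1 : ((2:ℝ) * A ^ p) ^ (1/p) = (2:ℝ) ^ (1/p) * A := by
      rw [Real.mul_rpow (by norm_num) (Real.rpow_nonneg hA0 p),
        ← Real.rpow_mul hA0, mul_one_div, div_self hp0.ne', Real.rpow_one]
    have l2 : ((A + B) ^ p) ^ (1/p) = A + B := by
      rw [← Real.rpow_mul (add_nonneg hA0 hB0), mul_one_div, div_self hp0.ne',
        Real.rpow_one]
    calc (2:ℝ) ^ (1/p) * A = ((2:ℝ) * A ^ p) ^ (1/p) := l1.symm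
      _ ≤ ((A + B) ^ p) ^ (1/p) := Real.rpow_le_rpow
          (mul_nonneg (by norm_num) (Real.rpow_nonneg hA0 p)) h3 (by positivity)
      _ = A + B := l2
  have hc : 0 < (2:ℝ) ^ (1/p) - 1 := by
    have : (1:ℝ) < (2:ℝ) ^ (1/p) := by
      rw [Real.one_lt_rpow_iff_of_pos (by norm_num)]
      exact Or.inl ⟨by norm_num, by positivity⟩
    linarith
  rw [inv_mul_eq_div, le_div_iff₀ hc]
  linarith
end
end

section
/- There are universal constants C₁, C₂ ≥ 1 such that for every n ≥ 2 and every Orlicz function G, there exists a monotone norm M on ℝⁿ that is (C₁·log₂ n)-supermodular and satisfies ‖x‖_G ≤ M(x) ≤ C₂·‖x‖_G for all x ∈ ℝⁿ with nonnegative coordinates. -/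
/-!
Let `q` be the exponent conjugate to `p = 2 log₂ n`, and let `g = truncConj G T`,
`g s = sup_{0 ≤ t ≤ T} (s t - G t)`, be the convex conjugate of `G`, truncated at a point `T`
with `G T > 1` so that it stays finite. The `q`-homogeneous function `B = orliczDual G T q`,
`B y = inf_{k > 0} k^{-q} (1 + ∑ g (k yᵢ)^q)`, is submodular on the nonnegative orthant, because
`(k, s) ↦ (g (k s) / k)^q` has increasing differences. Hence its conjugate
`F = orliczEnvelope G T q`, `F x = sup_{y ≥ 0} (⟪x, y⟫ - B y)`, is convex, `p`-homogeneous and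
supermodular, and `x ↦ F |x| ^ (1/p)` is a monotone, `p`-supermodular norm.

Young's inequality `s t ≤ g s + G t` and the power-mean inequality give `F x ≤ (n + 1) ‖x‖_G^p`.
Conversely, testing `F` against the chord slopes `yᵢ = (G (2 zᵢ) - G zᵢ) / zᵢ` of `G` at
`z = x / α`, where `∑ G (x i / α) ≥ 1`, gives `F x ≥ (α / 10)^p`, using `G (2 t) ≥ 2 G t`.
As `(n + 1)^(1/p) ≤ 2`, the norm `M = 10 F(|·|)^(1/p)` works with `C₁ = 2` and `C₂ = 20`.
-/

noncomputable section

/-- An Orlicz function: continuous, convex and nondecreasing on `[0,∞)`, with `G 0 = 0` and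
`G(t) → ∞` as `t → ∞`. -/
def IsOrliczFunction (G : ℝ → ℝ) : Prop :=
  ContinuousOn G (Set.Ici 0) ∧ ConvexOn ℝ (Set.Ici 0) G ∧
  MonotoneOn G (Set.Ici 0) ∧ G 0 = 0 ∧
  Filter.Tendsto G Filter.atTop Filter.atTop

/-- The Orlicz norm generated by `G`: `inf {α > 0 : ∑ᵢ G (xᵢ/α) ≤ 1}`. -/
def orliczNorm {n : ℕ} (G : ℝ → ℝ) (x : Fin n → ℝ) : ℝ :=
  sInf {α : ℝ | 0 < α ∧ ∑ i, G (x i / α) ≤ 1}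


open Real Set

theorem ConvexOn.secant_le_secant {f : ℝ → ℝ} {s : Set ℝ} (hf : ConvexOn ℝ s f)
    {a₁ b₁ a₂ b₂ : ℝ} (ha₁ : a₁ ∈ s) (hb₁ : b₁ ∈ s) (ha₂ : a₂ ∈ s) (hb₂ : b₂ ∈ s)
    (h₁ : a₁ < b₁) (h₂ : a₂ < b₂) (ha : a₁ ≤ a₂) (hb : b₁ ≤ b₂) :
    (f b₁ - f a₁) / (b₁ - a₁) ≤ (f b₂ - f a₂) / (b₂ - a₂) :=
  calc (f b₁ - f a₁) / (b₁ - a₁) ≤ (f b₂ - f a₁) / (b₂ - a₁) :=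
        hf.secant_mono ha₁ hb₁ hb₂ h₁.ne' (h₁.trans_le hb).ne' hb
    _ = (f a₁ - f b₂) / (a₁ - b₂) := by rw [← neg_div_neg_eq, neg_sub, neg_sub]
    _ ≤ (f a₂ - f b₂) / (a₂ - b₂) := hf.secant_mono hb₂ ha₁ ha₂ (h₁.trans_le hb).ne h₂.ne ha
    _ = (f b₂ - f a₂) / (b₂ - a₂) := by rw [← neg_div_neg_eq, neg_sub, neg_sub]

theorem ConvexOn.add_sub_le_add_sub {f : ℝ → ℝ} (hf : ConvexOn ℝ (Ici 0) f)
    (hm : MonotoneOn f (Ici 0)) {a₁ a₂ d₁ d₂ : ℝ} (ha₁ : 0 ≤ a₁) (ha : a₁ ≤ a₂) (hd₁ : 0 ≤ d₁)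
    (hd : d₁ ≤ d₂) : f (a₁ + d₁) - f a₁ ≤ f (a₂ + d₂) - f a₂ := by
  have hshift : f (a₁ + d₁) - f a₁ ≤ f (a₂ + d₁) - f a₂ := by
    rcases hd₁.eq_or_lt with rfl | hd₁
    · simp
    have h := hf.secant_le_secant (a₁ := a₁) (b₁ := a₁ + d₁) (a₂ := a₂) (b₂ := a₂ + d₁)
      ha₁ (mem_Ici.2 (by positivity)) (ha₁.trans ha) (mem_Ici.2 (by linarith))
      (by linarith) (by linarith) ha (by linarith)
    simp only [add_sub_cancel_left] at h
    exact (div_le_div_iff_of_pos_right hd₁).mp h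
  have : f (a₂ + d₁) ≤ f (a₂ + d₂) :=
    hm (mem_Ici.2 (by linarith)) (mem_Ici.2 (by linarith)) (by linarith)
  linarith

theorem ConvexOn.map_mul_le_mul {φ : ℝ → ℝ} (hφ : ConvexOn ℝ (Ici 0) φ) (hφ0 : φ 0 = 0) {c t : ℝ}
    (hc₀ : 0 ≤ c) (hc₁ : c ≤ 1) (ht : 0 ≤ t) : φ (c * t) ≤ c * φ t := by
  simpa [hφ0] using hφ.2 (mem_Ici.2 ht) self_mem_Ici hc₀ (sub_nonneg.2 hc₁) (add_sub_cancel c 1)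

theorem ConvexOn.rpow_div_add_rpow_div_le {φ : ℝ → ℝ} (hφ : ConvexOn ℝ (Ici 0) φ)
    (hm : MonotoneOn φ (Ici 0)) (hφ0 : φ 0 = 0) {q : ℝ} (hq : 1 ≤ q) {k₁ k₂ a b : ℝ}
    (hk₁ : 0 < k₁) (hk : k₁ ≤ k₂) (ha : 0 ≤ a) (hab : a ≤ b) :
    (φ (k₁ * b) / k₁) ^ q + (φ (k₂ * a) / k₂) ^ q ≤
      (φ (k₁ * a) / k₁) ^ q + (φ (k₂ * b) / k₂) ^ q := by
  rcases hab.eq_or_lt with rfl | hab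
  · rw [add_comm]
  have hk₂ : 0 < k₂ := hk₁.trans_le hk
  have hφnn : 0 ≤ φ (k₁ * a) := hφ0 ▸ hm self_mem_Ici (mem_Ici.2 (by positivity)) (by positivity)
  have hscale : φ (k₁ * a) / k₁ ≤ φ (k₂ * a) / k₂ := by
    have h := hφ.map_mul_le_mul hφ0 (div_nonneg hk₁.le hk₂.le) ((div_le_one hk₂).2 hk)
      (mul_nonneg hk₂.le ha)
    rw [← mul_assoc, div_mul_cancel₀ _ hk₂.ne'] at h
    calc φ (k₁ * a) / k₁ ≤ k₁ / k₂ * φ (k₂ * a) / k₁ := by gcongr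
      _ = φ (k₂ * a) / k₂ := by field_simp
  have hsecant : φ (k₁ * b) / k₁ - φ (k₁ * a) / k₁ ≤ φ (k₂ * b) / k₂ - φ (k₂ * a) / k₂ := by
    have h := hφ.secant_le_secant (a₁ := k₁ * a) (b₁ := k₁ * b) (a₂ := k₂ * a) (b₂ := k₂ * b)
      (mem_Ici.2 (by positivity)) (mem_Ici.2 (by nlinarith)) (mem_Ici.2 (by positivity))
      (mem_Ici.2 (by nlinarith)) (by nlinarith) (by nlinarith)
      (by gcongr) (by gcongr; linarith)
    rw [← mul_sub, ← mul_sub, ← div_div, ← div_div, div_le_div_iff_of_pos_right (by linarith)] at h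
    rwa [← sub_div, ← sub_div]
  have hmono : φ (k₁ * a) / k₁ ≤ φ (k₁ * b) / k₁ :=
    div_le_div_of_nonneg_right (hm (mem_Ici.2 (by positivity)) (mem_Ici.2 (by nlinarith))
      (by nlinarith)) hk₁.le
  have h := (convexOn_rpow hq).add_sub_le_add_sub
    (monotoneOn_rpow_Ici_of_exponent_nonneg (by linarith)) (div_nonneg hφnn hk₁.le) hscale
    (sub_nonneg.2 hmono) hsecant
  simp only [add_sub_cancel] at h
  linarith

theorem Finset.sum_rpow_le_rpow_sum {ι : Type*} (s : Finset ι) {f : ι → ℝ}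
    (hf : ∀ i ∈ s, 0 ≤ f i) {q : ℝ} (hq : 1 ≤ q) : ∑ i ∈ s, f i ^ q ≤ (∑ i ∈ s, f i) ^ q := by
  induction s using Finset.cons_induction with
  | empty => simp [zero_rpow (by linarith : q ≠ 0)]
  | cons a s ha ih =>
    simp only [Finset.mem_cons, forall_eq_or_imp] at hf
    rw [Finset.sum_cons, Finset.sum_cons]
    calc f a ^ q + ∑ i ∈ s, f i ^ q ≤ f a ^ q + (∑ i ∈ s, f i) ^ q := by gcongr; exact ih hf.2
      _ ≤ (f a + ∑ i ∈ s, f i) ^ q := add_rpow_le_rpow_add hf.1 (Finset.sum_nonneg hf.2) hq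

theorem one_add_sum_rpow_le {ι : Type*} [Fintype ι] {f : ι → ℝ} (hf : ∀ i, 0 ≤ f i) {q : ℝ}
    (hq : 1 ≤ q) : (1 + ∑ i, f i) ^ q ≤ (Fintype.card ι + 1) ^ (q - 1) * (1 + ∑ i, f i ^ q) := by
  have h := rpow_sum_le_const_mul_sum_rpow_of_nonneg Finset.univ
    (f := fun o : Option ι => o.elim 1 f) hq (by rintro (_ | i) _ <;> simp [hf])
  simpa [Fintype.sum_option, Fintype.card_option] using h

theorem sub_rpow_div_le {p q R D : ℝ} (hpq : p.HolderConjugate q) (hR : 0 ≤ R) (hD : 0 < D) :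
    R - R ^ q / D ≤ D ^ (p - 1) := by
  rcases le_or_gt R (D ^ (p - 1)) with h | h
  · have : 0 ≤ R ^ q / D := by positivity
    linarith
  have hRpos : 0 < R := (rpow_pos_of_pos hD _).trans h
  have hexp : (p - 1) * (q - 1) = 1 := by linear_combination hpq.sub_one_mul_conj
  have hDR : D < R ^ (q - 1) := by
    simpa [← rpow_mul hD.le, hexp] using rpow_lt_rpow (by positivity) h (sub_pos.2 hpq.symm.lt)
  have hRq : R ^ q = R * R ^ (q - 1) := by
    rw [← rpow_one_add' hR (by linarith [hpq.symm.lt]), add_sub_cancel]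
  have : R < R ^ q / D := by
    rw [lt_div_iff₀ hD, hRq]
    exact mul_lt_mul_of_pos_left hDR hRpos
  have : (0 : ℝ) ≤ D ^ (p - 1) := by positivity
  linarith

def PosHomogeneousOn {E : Type*} [AddCommGroup E] [Module ℝ E] (s : Set E) (f : E → ℝ) (p : ℝ) :
    Prop :=
  ∀ c : ℝ, 0 < c → ∀ x ∈ s, f (c • x) = c ^ p * f x

namespace PosHomogeneousOn

variable {E : Type*} [AddCommGroup E] [Module ℝ E] {s : Set E} {f : E → ℝ} {p : ℝ}

theorem of_le (hs : ∀ c : ℝ, 0 < c → ∀ x ∈ s, c • x ∈ s)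
    (h : ∀ c : ℝ, 0 < c → ∀ x ∈ s, f (c • x) ≤ c ^ p * f x) : PosHomogeneousOn s f p := by
  intro c hc x hx
  refine (h c hc x hx).antisymm ?_
  have h' := h c⁻¹ (inv_pos.2 hc) (c • x) (hs c hc x hx)
  rw [inv_smul_smul₀ hc.ne'] at h'
  calc c ^ p * f x ≤ c ^ p * (c⁻¹ ^ p * f (c • x)) := by gcongr
    _ = f (c • x) := by
      rw [← mul_assoc, ← mul_rpow hc.le (inv_nonneg.2 hc.le), mul_inv_cancel₀ hc.ne', one_rpow,
        one_mul]

theorem map_zero (hf : PosHomogeneousOn s f p) (hp : 0 < p) (h0 : (0 : E) ∈ s) : f 0 = 0 := by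
  have h := hf 2 two_pos 0 h0
  rw [smul_zero] at h
  have : 1 < (2 : ℝ) ^ p := one_lt_rpow one_lt_two hp
  nlinarith [h]

end PosHomogeneousOn

theorem ConvexOn.rpow_inv_add_le {E : Type*} [AddCommGroup E] [Module ℝ E] {s : Set E}
    {F : E → ℝ} {p : ℝ} (hF : ConvexOn ℝ s F) (hs : ∀ c : ℝ, 0 < c → ∀ x ∈ s, c • x ∈ s)
    (hp : 0 < p) (hhom : PosHomogeneousOn s F p) (hpos : ∀ x ∈ s, x ≠ 0 → 0 < F x)
    {a b : E} (ha : a ∈ s) (hb : b ∈ s) : F (a + b) ^ p⁻¹ ≤ F a ^ p⁻¹ + F b ^ p⁻¹ := by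
  have hp' : p⁻¹ ≠ 0 := inv_ne_zero hp.ne'
  rcases eq_or_ne a 0 with rfl | ha0
  · simp [hhom.map_zero hp ha, zero_rpow hp']
  rcases eq_or_ne b 0 with rfl | hb0
  · simp [hhom.map_zero hp hb, zero_rpow hp']
  set α := F a ^ p⁻¹
  set β := F b ^ p⁻¹
  have hα : 0 < α := rpow_pos_of_pos (hpos a ha ha0) _
  have hβ : 0 < β := rpow_pos_of_pos (hpos b hb hb0) _
  have hFa : F a = α ^ p := (rpow_inv_rpow (hpos a ha ha0).le hp.ne').symm
  have hFb : F b = β ^ p := (rpow_inv_rpow (hpos b hb hb0).le hp.ne').symm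
  -- `a + b` is a convex combination of two points where `F` equals `(α + β) ^ p`
  set u := ((α + β) / α) • a
  set v := ((α + β) / β) • b
  have hu : u ∈ s := hs _ (by positivity) a ha
  have hv : v ∈ s := hs _ (by positivity) b hb
  have hFu : F u = (α + β) ^ p := by
    rw [hhom _ (by positivity) a ha, hFa, ← mul_rpow (by positivity) hα.le,
      div_mul_cancel₀ _ hα.ne']
  have hFv : F v = (α + β) ^ p := by
    rw [hhom _ (by positivity) b hb, hFb, ← mul_rpow (by positivity) hβ.le,
      div_mul_cancel₀ _ hβ.ne']
  have hsum : α / (α + β) + β / (α + β) = 1 := by rw [← add_div, div_self (by positivity)]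
  have hab : (α / (α + β)) • u + (β / (α + β)) • v = a + b := by
    have e₁ : α / (α + β) * ((α + β) / α) = 1 := by field_simp
    have e₂ : β / (α + β) * ((α + β) / β) = 1 := by field_simp
    simp only [u, v, smul_smul, e₁, e₂, one_smul]
  have hconv := hF.2 hu hv (by positivity) (by positivity) hsum
  rw [hab, hFu, hFv, smul_eq_mul, smul_eq_mul, ← add_mul, hsum, one_mul] at hconv
  have hs_ab : a + b ∈ s := hab ▸ hF.1 hu hv (by positivity) (by positivity) hsum
  have hF_ab : 0 ≤ F (a + b) := by
    rcases eq_or_ne (a + b) 0 with h | h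
    · rw [h, hhom.map_zero hp (h ▸ hs_ab)]
    · exact (hpos _ hs_ab h).le
  calc F (a + b) ^ p⁻¹ ≤ ((α + β) ^ p) ^ p⁻¹ := by gcongr
    _ = α + β := rpow_rpow_inv (by positivity) hp.ne'

section MonotoneNorm

variable {n : ℕ}

theorem IsMonotoneNorm.const_mul {N : (Fin n → ℝ) → ℝ} (hN : IsMonotoneNorm N) {C : ℝ}
    (hC : 0 < C) : IsMonotoneNorm fun x => C * N x := by
  obtain ⟨htri, hsmul, hdef, hmono⟩ := hN
  refine ⟨fun x y => ?_, fun c x => ?_, fun x hx => hdef x ?_, fun x y hx hxy => ?_⟩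
  · rw [← mul_add]; exact mul_le_mul_of_nonneg_left (htri x y) hC.le
  · show C * N (c • x) = |c| * (C * N x)
    rw [hsmul]; ring
  · exact (mul_eq_zero.1 hx).resolve_left hC.ne'
  · exact mul_le_mul_of_nonneg_left (hmono x y hx hxy) hC.le

theorem IsPSupermodular.const_mul {N : (Fin n → ℝ) → ℝ} {p : ℝ} (hN : IsPSupermodular N p)
    (hnn : ∀ x, 0 ≤ x → 0 ≤ N x) {C : ℝ} (hC : 0 ≤ C) : IsPSupermodular (fun x => C * N x) p := by
  intro u v w hu hv hw
  have huv := add_nonneg hu hv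
  simp only [mul_rpow hC (hnn _ hu), mul_rpow hC (hnn _ huv),
    mul_rpow hC (hnn _ (add_nonneg hu hw)), mul_rpow hC (hnn _ (add_nonneg huv hw)), ← mul_sub]
  exact mul_le_mul_of_nonneg_left (hN u v w hu hv hw) (rpow_nonneg hC p)

variable {F : (Fin n → ℝ) → ℝ} {p : ℝ}

theorem isMonotoneNorm_rpow_inv_comp_abs (hp : 0 < p) (hconv : ConvexOn ℝ (Ici 0) F)
    (hhom : PosHomogeneousOn (Ici 0) F p) (hmono : MonotoneOn F (Ici 0))
    (hpos : ∀ x, 0 ≤ x → x ≠ 0 → 0 < F x) : IsMonotoneNorm fun x => F |x| ^ p⁻¹ := by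
  have hp' : p⁻¹ ≠ 0 := inv_ne_zero hp.ne'
  have hF0 : F 0 = 0 := hhom.map_zero hp self_mem_Ici
  have hnn : ∀ x, 0 ≤ x → 0 ≤ F x := fun x hx =>
    (eq_or_ne x 0).elim (fun h => h ▸ hF0.ge) fun h => (hpos x hx h).le
  have hcone : ∀ c : ℝ, 0 < c → ∀ x ∈ Ici (0 : Fin n → ℝ), c • x ∈ Ici 0 :=
    fun c hc x hx => mem_Ici.2 (smul_nonneg hc.le hx)
  refine ⟨fun x y => ?_, fun c x => ?_, fun x hx => ?_, fun x y hx hxy => ?_⟩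
  · calc F |x + y| ^ p⁻¹ ≤ F (|x| + |y|) ^ p⁻¹ := by
          gcongr
          · exact hnn _ (abs_nonneg _)
          · exact hmono (abs_nonneg (x + y)) (add_nonneg (abs_nonneg x) (abs_nonneg y))
              (abs_add_le x y)
      _ ≤ F |x| ^ p⁻¹ + F |y| ^ p⁻¹ :=
          hconv.rpow_inv_add_le hcone hp hhom hpos (abs_nonneg x) (abs_nonneg y)
  · have habs : |c • x| = |c| • |x| := by ext i; simp [abs_mul]
    dsimp only
    rcases eq_or_ne c 0 with rfl | hc
    · simp [hF0, zero_rpow hp']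
    rw [habs, hhom _ (abs_pos.2 hc) _ (abs_nonneg x),
      mul_rpow (by positivity) (hnn _ (abs_nonneg x)),
      rpow_rpow_inv (abs_nonneg c) hp.ne']
  · rw [rpow_eq_zero (hnn _ (abs_nonneg x)) hp'] at hx
    by_contra h
    have : |x| ≠ 0 := fun h' => h (by ext i; simpa using congrFun h' i)
    exact (hpos _ (abs_nonneg x) this).ne' hx
  · simp only [abs_of_nonneg hx, abs_of_nonneg (hx.trans hxy)]
    exact rpow_le_rpow (hnn x hx) (hmono hx (hx.trans hxy) hxy) (inv_nonneg.2 hp.le)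

theorem isPSupermodular_rpow_inv_comp_abs (hp : 0 < p) (hnn : ∀ x, 0 ≤ x → 0 ≤ F x)
    (hsup : ∀ u v w, 0 ≤ u → 0 ≤ v → 0 ≤ w → F (u + w) - F u ≤ F (u + v + w) - F (u + v)) :
    IsPSupermodular (fun x => F |x| ^ p⁻¹) p := by
  intro u v w hu hv hw
  have huv := add_nonneg hu hv
  simp only [abs_of_nonneg, hu, huv, add_nonneg hu hw, add_nonneg huv hw,
    rpow_inv_rpow (hnn _ _) hp.ne']
  exact hsup u v w hu hv hw

end MonotoneNorm

section Homogenization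

variable {E : Type*} [AddCommGroup E] [Module ℝ E]

def homogenization (Φ : E → ℝ) (q : ℝ) (y : E) : ℝ :=
  ⨅ k : Ioi (0 : ℝ), (k : ℝ) ^ (-q) * Φ ((k : ℝ) • y)

variable {Φ : E → ℝ} {q : ℝ}

theorem homogenization_le (hΦ : ∀ y, 0 ≤ Φ y) (y : E) {k : ℝ} (hk : 0 < k) :
    homogenization Φ q y ≤ k ^ (-q) * Φ (k • y) :=
  ciInf_le (f := fun k : Ioi (0 : ℝ) => (k : ℝ) ^ (-q) * Φ ((k : ℝ) • y))
    ⟨0, by rintro _ ⟨⟨k, hk⟩, rfl⟩; exact mul_nonneg (rpow_nonneg hk.le _) (hΦ _)⟩ ⟨k, hk⟩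

theorem le_homogenization {y : E} {a : ℝ} (h : ∀ k : ℝ, 0 < k → a ≤ k ^ (-q) * Φ (k • y)) :
    a ≤ homogenization Φ q y :=
  le_ciInf fun k => h k k.2

theorem posHomogeneousOn_homogenization (hΦ : ∀ y, 0 ≤ Φ y) :
    PosHomogeneousOn univ (homogenization Φ q) q := by
  refine .of_le (fun _ _ _ _ => mem_univ _) fun c hc y _ => ?_
  have hcq : 0 < c ^ q := rpow_pos_of_pos hc q
  rw [← div_le_iff₀' hcq]
  refine le_homogenization fun k hk => ?_
  rw [div_le_iff₀' hcq]
  calc homogenization Φ q (c • y) ≤ (k / c) ^ (-q) * Φ ((k / c) • c • y) :=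
        homogenization_le hΦ _ (by positivity)
    _ = c ^ q * (k ^ (-q) * Φ (k • y)) := by
        rw [smul_smul, div_mul_cancel₀ _ hc.ne', div_rpow hk.le hc.le, rpow_neg hc.le,
          div_inv_eq_mul]
        ring

theorem homogenization_sup_add_inf_le [Lattice E] (hΦ : ∀ y, 0 ≤ Φ y)
    (hexch : ∀ y z : E, 0 ≤ y → ∀ k₁ k₂ : ℝ, 0 < k₁ → k₁ ≤ k₂ →
      k₁ ^ (-q) * Φ (k₁ • (y ⊔ z)) + k₂ ^ (-q) * Φ (k₂ • (y ⊓ z)) ≤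
        k₁ ^ (-q) * Φ (k₁ • y) + k₂ ^ (-q) * Φ (k₂ • z))
    {y z : E} (hy : 0 ≤ y) (hz : 0 ≤ z) :
    homogenization Φ q (y ⊔ z) + homogenization Φ q (y ⊓ z) ≤
      homogenization Φ q y + homogenization Φ q z := by
  refine le_ciInf_add_ciInf fun ⟨k₁, hk₁⟩ ⟨k₂, hk₂⟩ => ?_
  rcases le_total k₁ k₂ with hk | hk
  · exact (add_le_add (homogenization_le hΦ _ hk₁) (homogenization_le hΦ _ hk₂)).trans
      (hexch y z hy k₁ k₂ hk₁ hk)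
  · rw [sup_comm, inf_comm, add_comm _ (_ * Φ (k₂ • z))]
    exact (add_le_add (homogenization_le hΦ _ hk₂) (homogenization_le hΦ _ hk₁)).trans
      (hexch z y hz k₂ k₁ hk₂ hk)

end Homogenization

section OrthantConj

variable {ι : Type*} [Fintype ι]

def orthantConj (B : (ι → ℝ) → ℝ) (x : ι → ℝ) : ℝ :=
  ⨆ y : Ici (0 : ι → ℝ), x ⬝ᵥ (y : ι → ℝ) - B y

variable {B : (ι → ℝ) → ℝ}

theorem le_orthantConj {x y : ι → ℝ} (hB : ∃ C, ∀ y, 0 ≤ y → x ⬝ᵥ y - B y ≤ C) (hy : 0 ≤ y) :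
    x ⬝ᵥ y - B y ≤ orthantConj B x :=
  le_ciSup (f := fun y : Ici (0 : ι → ℝ) => x ⬝ᵥ (y : ι → ℝ) - B y)
    (hB.imp fun _ hC => by rintro _ ⟨y, rfl⟩; exact hC y y.2) ⟨y, hy⟩

theorem orthantConj_le {x : ι → ℝ} {a : ℝ} (h : ∀ y, 0 ≤ y → x ⬝ᵥ y - B y ≤ a) :
    orthantConj B x ≤ a :=
  ciSup_le fun y => h y y.2

theorem monotoneOn_orthantConj
    (hB : ∀ x, 0 ≤ x → ∃ C, ∀ y, 0 ≤ y → x ⬝ᵥ y - B y ≤ C) :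
    MonotoneOn (orthantConj B) (Ici 0) :=
  fun _ _ x₂ hx₂ hx => orthantConj_le fun _ hy =>
    (sub_le_sub_right (dotProduct_le_dotProduct_of_nonneg_right hx hy) _).trans
      (le_orthantConj (hB x₂ hx₂) hy)

theorem convexOn_orthantConj
    (hB : ∀ x, 0 ≤ x → ∃ C, ∀ y, 0 ≤ y → x ⬝ᵥ y - B y ≤ C) :
    ConvexOn ℝ (Ici 0) (orthantConj B) := by
  refine ⟨convex_Ici 0, fun x₁ hx₁ x₂ hx₂ a b ha hb hab => orthantConj_le fun y hy => ?_⟩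
  have e : (a • x₁ + b • x₂) ⬝ᵥ y - B y = a * (x₁ ⬝ᵥ y - B y) + b * (x₂ ⬝ᵥ y - B y) := by
    rw [add_dotProduct, smul_dotProduct, smul_dotProduct, smul_eq_mul, smul_eq_mul]
    linear_combination (B y) * hab
  rw [e, smul_eq_mul, smul_eq_mul]
  gcongr
  exacts [le_orthantConj (hB x₁ hx₁) hy, le_orthantConj (hB x₂ hx₂) hy]

theorem orthantConj_add_sub_le
    (hB : ∀ x, 0 ≤ x → ∃ C, ∀ y, 0 ≤ y → x ⬝ᵥ y - B y ≤ C)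
    (hsub : ∀ y z, 0 ≤ y → 0 ≤ z → B (y ⊔ z) + B (y ⊓ z) ≤ B y + B z)
    {u v w : ι → ℝ} (hu : 0 ≤ u) (hv : 0 ≤ v) (hw : 0 ≤ w) :
    orthantConj B (u + w) - orthantConj B u ≤
      orthantConj B (u + v + w) - orthantConj B (u + v) := by
  suffices orthantConj B (u + w) + orthantConj B (u + v) ≤
      orthantConj B (u + v + w) + orthantConj B u by linarith
  refine ciSup_add_ciSup_le fun ⟨y, hy⟩ ⟨z, hz⟩ => ?_
  have hpair : (u + w) ⬝ᵥ y + (u + v) ⬝ᵥ z ≤ (u + v + w) ⬝ᵥ (y ⊔ z) + u ⬝ᵥ (y ⊓ z) := by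
    simp only [dotProduct, ← Finset.sum_add_distrib]
    refine Finset.sum_le_sum fun i _ => ?_
    simp only [Pi.add_apply, Pi.sup_apply, Pi.inf_apply]
    rcases le_total (y i) (z i) with h | h
    · rw [max_eq_right h, min_eq_left h]
      nlinarith [mul_le_mul_of_nonneg_left h (hw i)]
    · rw [max_eq_left h, min_eq_right h]
      nlinarith [mul_le_mul_of_nonneg_left h (hv i)]
  have h₁ := le_orthantConj (hB _ (add_nonneg (add_nonneg hu hv) hw))
    (le_sup_of_le_left (b := z) hy)
  have h₂ := le_orthantConj (hB _ hu) (le_inf hy hz)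
  have := hsub y z hy hz
  dsimp only
  linarith

theorem posHomogeneousOn_orthantConj
    (hB : ∀ x, 0 ≤ x → ∃ C, ∀ y, 0 ≤ y → x ⬝ᵥ y - B y ≤ C) {p q : ℝ} (hpq : p.HolderConjugate q)
    (hhom : PosHomogeneousOn (Ici 0) B q) : PosHomogeneousOn (Ici 0) (orthantConj B) p := by
  refine .of_le (fun c hc x hx => mem_Ici.2 (smul_nonneg hc.le hx)) fun c hc x hx =>
    orthantConj_le fun y hy => ?_
  have hc' : 0 < c ^ (p - 1) := rpow_pos_of_pos hc _
  set z := (c ^ (p - 1))⁻¹ • y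
  have hz : 0 ≤ z := smul_nonneg (inv_nonneg.2 hc'.le) hy
  have hyz : y = c ^ (p - 1) • z := (smul_inv_smul₀ hc'.ne' y).symm
  have hcp : c * c ^ (p - 1) = c ^ p := by
    rw [mul_comm, ← rpow_add_one hc.ne', sub_add_cancel]
  calc (c • x) ⬝ᵥ y - B y = c ^ p * (x ⬝ᵥ z - B z) := by
        rw [hyz, hhom _ hc' z hz, ← rpow_mul hc.le, hpq.sub_one_mul_conj, smul_dotProduct,
          dotProduct_smul, smul_eq_mul, smul_eq_mul, ← mul_assoc, hcp]
        ring
    _ ≤ c ^ p * orthantConj B x := by gcongr; exact le_orthantConj (hB x hx) hz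

end OrthantConj

def truncConj (G : ℝ → ℝ) (T s : ℝ) : ℝ :=
  ⨆ t : Icc 0 T, s * t - G t

theorem truncConj_le {G : ℝ → ℝ} {T s a : ℝ} (h : ∀ t ∈ Icc 0 T, s * t - G t ≤ a) (ha : 0 ≤ a) :
    truncConj G T s ≤ a :=
  Real.iSup_le (fun t => h t t.2) ha

-- The junk value `chordSlope G 0 = 0` is harmless: see `mul_chordSlope`.
def chordSlope (G : ℝ → ℝ) (z : ℝ) : ℝ :=
  (G (2 * z) - G z) / z

theorem mul_chordSlope (G : ℝ → ℝ) (z : ℝ) : z * chordSlope G z = G (2 * z) - G z := by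
  rcases eq_or_ne z 0 with rfl | hz
  · simp
  · exact mul_div_cancel₀ _ hz

namespace IsOrliczFunction

variable {G : ℝ → ℝ} {T : ℝ}

theorem nonneg (hG : IsOrliczFunction G) {t : ℝ} (ht : 0 ≤ t) : 0 ≤ G t :=
  hG.2.2.2.1 ▸ hG.2.2.1 self_mem_Ici ht ht

theorem two_mul_le_apply_two_mul (hG : IsOrliczFunction G) {z : ℝ} (hz : 0 ≤ z) :
    2 * G z ≤ G (2 * z) := by
  have h := hG.2.1.map_mul_le_mul hG.2.2.2.1 (by norm_num : (0 : ℝ) ≤ 1 / 2) (by norm_num)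
    (by linarith : 0 ≤ 2 * z)
  rw [← mul_assoc, one_div_mul_cancel two_ne_zero, one_mul] at h
  linarith

theorem chordSlope_nonneg (hG : IsOrliczFunction G) {z : ℝ} (hz : 0 ≤ z) : 0 ≤ chordSlope G z :=
  div_nonneg (by linarith [hG.two_mul_le_apply_two_mul hz, hG.nonneg hz]) hz

theorem le_truncConj (hG : IsOrliczFunction G) {s t : ℝ} (ht : t ∈ Icc 0 T) :
    s * t - G t ≤ truncConj G T s := by
  refine le_ciSup (f := fun t : Icc 0 T => s * t - G t) ⟨|s| * T, ?_⟩ ⟨t, ht⟩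
  rintro _ ⟨⟨t, ht⟩, rfl⟩
  have := hG.nonneg ht.1
  have := abs_mul s t ▸ le_abs_self (s * t)
  have : |s| * |t| ≤ |s| * T := by gcongr; exact (abs_of_nonneg ht.1).trans_le ht.2
  dsimp only
  linarith

theorem truncConj_nonneg (hG : IsOrliczFunction G) (hT : 0 ≤ T) (s : ℝ) :
    0 ≤ truncConj G T s := by
  simpa [hG.2.2.2.1] using hG.le_truncConj (s := s) ⟨le_rfl, hT⟩

theorem truncConj_zero (hG : IsOrliczFunction G) (hT : 0 ≤ T) : truncConj G T 0 = 0 :=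
  (truncConj_le (fun t ht => by simp [hG.nonneg ht.1]) le_rfl).antisymm
    (hG.truncConj_nonneg hT 0)

theorem monotone_truncConj (hG : IsOrliczFunction G) (hT : 0 ≤ T) : Monotone (truncConj G T) :=
  fun _ s₂ hs => truncConj_le
    (fun _ ht => (sub_le_sub_right (mul_le_mul_of_nonneg_right hs ht.1) _).trans
      (hG.le_truncConj ht))
    (hG.truncConj_nonneg hT s₂)

theorem convexOn_truncConj (hG : IsOrliczFunction G) (hT : 0 ≤ T) :
    ConvexOn ℝ univ (truncConj G T) := by
  refine ⟨convex_univ, fun x _ y _ a b ha hb hab => truncConj_le (fun t ht => ?_) ?_⟩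
  · have e : (a • x + b • y) * t - G t = a * (x * t - G t) + b * (y * t - G t) := by
      simp only [smul_eq_mul]; linear_combination (G t) * hab
    rw [e, smul_eq_mul, smul_eq_mul]
    gcongr <;> exact hG.le_truncConj ht
  · have := hG.truncConj_nonneg hT x
    have := hG.truncConj_nonneg hT y
    positivity

theorem truncConj_chordSlope_le (hG : IsOrliczFunction G) (hT : 0 ≤ T) {z : ℝ} (hz : 0 ≤ z) :
    truncConj G T (chordSlope G z) ≤ 2 * (G (2 * z) - G z) := by
  rcases hz.eq_or_lt with rfl | hz
  · simp [chordSlope, hG.truncConj_zero hT]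
  have hy := hG.chordSlope_nonneg hz.le
  have hyz := mul_chordSlope G z
  have := hG.two_mul_le_apply_two_mul hz.le
  have := hG.nonneg hz.le
  refine truncConj_le (fun t ht => ?_) (by linarith)
  rcases le_or_gt t (2 * z) with h | h
  · have := hG.nonneg ht.1
    nlinarith
  · -- beyond `2 z`, convexity of `G` keeps its slope above `chordSlope G z`
    have hslope := hG.2.1.slope_mono_adjacent (mem_Ici.2 hz.le) (mem_Ici.2 ht.1)
      (by linarith : z < 2 * z) h
    rw [show 2 * z - z = z by ring, le_div_iff₀ (by linarith)] at hslope
    have := hG.nonneg (by linarith : 0 ≤ 2 * z)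
    simp only [chordSlope] at hy hyz ⊢
    nlinarith

end IsOrliczFunction

section OrliczNorm

open Filter Topology

variable {n : ℕ} {G : ℝ → ℝ} {x : Fin n → ℝ}

theorem orliczNorm_le {a : ℝ} (ha : 0 ≤ a) (h : ∀ α, 0 < α → 1 < ∑ i, G (x i / α) → α ≤ a) :
    orliczNorm G x ≤ a := by
  refine le_of_forall_gt_imp_ge_of_dense fun β hβ => csInf_le ⟨0, fun _ hα => hα.1.le⟩ ⟨?_, ?_⟩
  · linarith
  · by_contra h'
    exact hβ.not_ge (h β (by linarith) (not_le.1 h'))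

theorem orliczNorm_nonneg (G : ℝ → ℝ) (x : Fin n → ℝ) : 0 ≤ orliczNorm G x :=
  Real.sInf_nonneg fun _ hα => hα.1.le

namespace IsOrliczFunction

theorem exists_sum_le_one (hG : IsOrliczFunction G) (hx : 0 ≤ x) :
    ∃ α, 0 < α ∧ ∑ i, G (x i / α) ≤ 1 := by
  have hlim : Tendsto (fun α => ∑ i, G (x i / α)) atTop (𝓝 0) := by
    have := tendsto_finsetSum Finset.univ fun i _ => (hG.1 0 self_mem_Ici).tendsto.comp
      (tendsto_nhdsWithin_iff.2 ⟨tendsto_const_nhds.div_atTop tendsto_id,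
        (eventually_gt_atTop 0).mono fun α hα => div_nonneg (hx i) hα.le⟩)
    simpa [hG.2.2.2.1] using this
  exact ((eventually_gt_atTop 0).and (hlim.eventually (ge_mem_nhds one_pos))).exists

theorem le_orliczNorm (hG : IsOrliczFunction G) (hx : 0 ≤ x) {a : ℝ}
    (h : ∀ α, 0 < α → ∑ i, G (x i / α) ≤ 1 → a ≤ α) : a ≤ orliczNorm G x :=
  le_csInf (hG.exists_sum_le_one hx) fun α hα => h α hα.1 hα.2

theorem exists_one_le_sum (hG : IsOrliczFunction G) (hx : 0 ≤ x) (hx0 : x ≠ 0) :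
    ∃ α, 0 < α ∧ 1 ≤ ∑ i, G (x i / α) := by
  obtain ⟨i, hi⟩ := Function.ne_iff.1 hx0
  have hxi : 0 < x i := (hx i).lt_of_ne' hi
  obtain ⟨t, hGt, ht⟩ := ((hG.2.2.2.2.eventually_ge_atTop 1).and (eventually_gt_atTop 0)).exists
  refine ⟨x i / t, div_pos hxi ht, ?_⟩
  calc 1 ≤ G (x i / (x i / t)) := by rwa [div_div_cancel₀ hxi.ne']
    _ ≤ ∑ j, G (x j / (x i / t)) :=
      Finset.single_le_sum (fun j _ => hG.nonneg (div_nonneg (hx j) (by positivity)))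
        (Finset.mem_univ i)

theorem div_le_of_sum_le_one (hG : IsOrliczFunction G) (hx : 0 ≤ x) {T α : ℝ} (hT0 : 0 ≤ T)
    (hT : 1 < G T) (hα : 0 < α) (hsum : ∑ i, G (x i / α) ≤ 1) (i : Fin n) : x i / α ≤ T := by
  by_contra! h
  have hle : G (x i / α) ≤ 1 := (Finset.single_le_sum (f := fun j => G (x j / α))
    (fun j _ => hG.nonneg (div_nonneg (hx j) hα.le)) (Finset.mem_univ i)).trans hsum
  have : G T ≤ G (x i / α) := hG.2.2.1 hT0 (mem_Ici.2 (div_nonneg (hx i) hα.le)) h.le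
  linarith

end IsOrliczFunction

end OrliczNorm

section OrliczDual

variable {ι : Type*} [Fintype ι]

def orliczDual (G : ℝ → ℝ) (T q : ℝ) : (ι → ℝ) → ℝ :=
  homogenization (fun y => 1 + ∑ i, truncConj G T (y i) ^ q) q

namespace IsOrliczFunction

variable {G : ℝ → ℝ} {T q : ℝ}

theorem one_add_sum_truncConj_rpow_nonneg (hG : IsOrliczFunction G) (hT : 0 ≤ T) (y : ι → ℝ) :
    0 ≤ 1 + ∑ i, truncConj G T (y i) ^ q := by
  have := Finset.sum_nonneg fun i (_ : i ∈ Finset.univ) =>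
    rpow_nonneg (hG.truncConj_nonneg hT (y i)) q
  positivity

theorem orliczDual_le (hG : IsOrliczFunction G) (hT : 0 ≤ T) (y : ι → ℝ) {k : ℝ} (hk : 0 < k) :
    orliczDual G T q y ≤ k ^ (-q) * (1 + ∑ i, truncConj G T (k * y i) ^ q) :=
  homogenization_le (hG.one_add_sum_truncConj_rpow_nonneg hT) y hk

theorem posHomogeneousOn_orliczDual (hG : IsOrliczFunction G) (hT : 0 ≤ T) :
    PosHomogeneousOn (Ici 0) (orliczDual (ι := ι) G T q) q :=
  fun c hc y _ => posHomogeneousOn_homogenization (hG.one_add_sum_truncConj_rpow_nonneg hT) c hc y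
    (mem_univ y)

theorem rpow_neg_mul_one_add_sum (hG : IsOrliczFunction G) (hT : 0 ≤ T) (y : ι → ℝ) {k : ℝ}
    (hk : 0 < k) : k ^ (-q) * (1 + ∑ i, truncConj G T ((k • y) i) ^ q) =
      k ^ (-q) + ∑ i, (truncConj G T (k * y i) / k) ^ q := by
  simp only [Pi.smul_apply, smul_eq_mul, mul_add, mul_one, Finset.mul_sum,
    div_rpow (hG.truncConj_nonneg hT _) hk.le, rpow_neg hk.le]
  congr 1
  exact Finset.sum_congr rfl fun i _ => by ring

theorem orliczDual_sup_add_inf_le (hG : IsOrliczFunction G) (hT : 0 ≤ T) (hq : 1 ≤ q)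
    {y z : ι → ℝ} (hy : 0 ≤ y) (hz : 0 ≤ z) :
    orliczDual G T q (y ⊔ z) + orliczDual G T q (y ⊓ z) ≤
      orliczDual G T q y + orliczDual G T q z := by
  refine homogenization_sup_add_inf_le (hG.one_add_sum_truncConj_rpow_nonneg hT)
    (fun y z hy k₁ k₂ hk₁ hk => ?_) hy hz
  have hk₂ := hk₁.trans_le hk
  simp only [hG.rpow_neg_mul_one_add_sum hT _ hk₁, hG.rpow_neg_mul_one_add_sum hT _ hk₂]
  have hcoord : ∀ i, (truncConj G T (k₁ * (y ⊔ z) i) / k₁) ^ q +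
      (truncConj G T (k₂ * (y ⊓ z) i) / k₂) ^ q ≤
      (truncConj G T (k₁ * y i) / k₁) ^ q + (truncConj G T (k₂ * z i) / k₂) ^ q := by
    intro i
    simp only [Pi.sup_apply, Pi.inf_apply]
    rcases le_total (z i) (y i) with h | h
    · rw [max_eq_left h, min_eq_right h]
    · rw [max_eq_right h, min_eq_left h]
      exact ((hG.convexOn_truncConj hT).subset (subset_univ _) (convex_Ici 0))
        |>.rpow_div_add_rpow_div_le ((hG.monotone_truncConj hT).monotoneOn _)
          (hG.truncConj_zero hT) hq hk₁ hk (hy i) h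
  have := Finset.sum_le_sum fun i (_ : i ∈ Finset.univ) => hcoord i
  simp only [Finset.sum_add_distrib] at this
  linarith

theorem orliczDual_smul_le (hG : IsOrliczFunction G) (hT : 0 ≤ T) (hq : 1 ≤ q) (hq2 : q ≤ 2)
    {y : ι → ℝ} (hy : 0 ≤ y) {W : ℝ} (hW : 1 ≤ W)
    (hφ : ∑ i, truncConj G T (y i) ≤ 2 * W) {r : ℝ} (hr : 0 < r) :
    orliczDual G T q (r • y) ≤ 5 * (r * W) ^ q := by
  have hW0 : 0 < W := by linarith
  have hφnn : ∀ i, 0 ≤ truncConj G T (y i) := fun i => hG.truncConj_nonneg hT (y i)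
  have hsum : ∑ i, truncConj G T (W⁻¹ * y i) ^ q ≤ 4 := by
    calc ∑ i, truncConj G T (W⁻¹ * y i) ^ q ≤ ∑ i, (W⁻¹ * truncConj G T (y i)) ^ q := by
          refine Finset.sum_le_sum fun i _ =>
            rpow_le_rpow (hG.truncConj_nonneg hT _) ?_ (by linarith)
          exact ((hG.convexOn_truncConj hT).subset (subset_univ _) (convex_Ici 0)).map_mul_le_mul
            (hG.truncConj_zero hT) (inv_nonneg.2 hW0.le) (inv_le_one_of_one_le₀ hW) (hy i)
      _ ≤ (∑ i, W⁻¹ * truncConj G T (y i)) ^ q :=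
          Finset.sum_rpow_le_rpow_sum _ (fun i _ => mul_nonneg (inv_nonneg.2 hW0.le) (hφnn i)) hq
      _ ≤ (2 : ℝ) ^ (2 : ℝ) := by
          rw [← Finset.mul_sum]
          refine (rpow_le_rpow (mul_nonneg (inv_nonneg.2 hW0.le) (Finset.sum_nonneg fun i _ =>
            hφnn i)) ?_ (by linarith)).trans
            (rpow_le_rpow_of_exponent_le one_le_two hq2)
          rwa [inv_mul_le_iff₀ hW0, mul_comm]
      _ = 4 := by norm_num
  calc orliczDual G T q (r • y) = r ^ q * orliczDual G T q y :=
        hG.posHomogeneousOn_orliczDual hT r hr y hy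
    _ ≤ r ^ q * (W⁻¹ ^ (-q) * (1 + ∑ i, truncConj G T (W⁻¹ * y i) ^ q)) := by
        gcongr; exact hG.orliczDual_le hT y (inv_pos.2 hW0)
    _ ≤ r ^ q * (W ^ q * 5) := by
        rw [inv_rpow hW0.le, ← rpow_neg hW0.le, neg_neg]
        gcongr; linarith
    _ = 5 * (r * W) ^ q := by rw [mul_rpow hr.le hW0.le]; ring

end IsOrliczFunction

end OrliczDual

section OrliczEnvelope

def orliczEnvelope {ι : Type*} [Fintype ι] (G : ℝ → ℝ) (T q : ℝ) : (ι → ℝ) → ℝ :=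
  orthantConj (orliczDual G T q)

variable {n : ℕ}

namespace IsOrliczFunction

variable {G : ℝ → ℝ} {T p q α : ℝ} {x y : Fin n → ℝ}

theorem dotProduct_mul_le (hG : IsOrliczFunction G) (hT0 : 0 ≤ T) (hT : 1 < G T) (hx : 0 ≤ x)
    (hα : 0 < α) (hsum : ∑ i, G (x i / α) ≤ 1) {k : ℝ} :
    x ⬝ᵥ y * k ≤ α * (1 + ∑ i, truncConj G T (k * y i)) := by
  -- Young's inequality `s t ≤ g(s) + G(t)` in each coordinate, with `t = x i / α ∈ [0, T]`
  have hyoung : ∑ i, x i / α * (k * y i) ≤ ∑ i, G (x i / α) + ∑ i, truncConj G T (k * y i) := by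
    rw [← Finset.sum_add_distrib]
    refine Finset.sum_le_sum fun i _ => ?_
    have := hG.le_truncConj (s := k * y i)
      ⟨div_nonneg (hx i) hα.le, hG.div_le_of_sum_le_one hx hT0 hT hα hsum i⟩
    linarith
  have e : ∑ i, x i / α * (k * y i) = x ⬝ᵥ y * k / α := by
    simp only [dotProduct, Finset.sum_mul, Finset.sum_div]
    exact Finset.sum_congr rfl fun i _ => by ring
  rw [e, div_le_iff₀' hα] at hyoung
  exact hyoung.trans (by gcongr)

theorem dotProduct_rpow_div_le_orliczDual (hG : IsOrliczFunction G) (hT0 : 0 ≤ T) (hT : 1 < G T)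
    (hq : 1 ≤ q) (hx : 0 ≤ x) (hy : 0 ≤ y) (hα : 0 < α) (hsum : ∑ i, G (x i / α) ≤ 1) :
    (x ⬝ᵥ y) ^ q / (α ^ q * (n + 1) ^ (q - 1)) ≤ orliczDual G T q y := by
  have hR := dotProduct_nonneg_of_nonneg hx hy
  refine le_homogenization fun k hk => ?_
  have hS := Finset.sum_nonneg fun i (_ : i ∈ Finset.univ) => hG.truncConj_nonneg hT0 (k * y i)
  have hkq : k ^ q * k ^ (-q) = 1 := by rw [rpow_neg hk.le, mul_inv_cancel₀ (by positivity)]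
  have key : (x ⬝ᵥ y) ^ q * k ^ q ≤
      α ^ q * (n + 1) ^ (q - 1) * (1 + ∑ i, truncConj G T (k * y i) ^ q) := by
    calc (x ⬝ᵥ y) ^ q * k ^ q = (x ⬝ᵥ y * k) ^ q := (mul_rpow hR hk.le).symm
      _ ≤ (α * (1 + ∑ i, truncConj G T (k * y i))) ^ q := by
          exact rpow_le_rpow (mul_nonneg hR hk.le) (hG.dotProduct_mul_le hT0 hT hx hα hsum)
            (by linarith)
      _ = α ^ q * (1 + ∑ i, truncConj G T (k * y i)) ^ q := mul_rpow hα.le (by positivity)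
      _ ≤ α ^ q * ((n + 1) ^ (q - 1) * (1 + ∑ i, truncConj G T (k * y i) ^ q)) := by
          gcongr
          simpa using one_add_sum_rpow_le (fun i => hG.truncConj_nonneg hT0 (k * y i)) hq
      _ = _ := by ring
  rw [div_le_iff₀ (by positivity)]
  calc (x ⬝ᵥ y) ^ q = (x ⬝ᵥ y) ^ q * k ^ q * k ^ (-q) := by rw [mul_assoc, hkq, mul_one]
    _ ≤ α ^ q * (n + 1) ^ (q - 1) * (1 + ∑ i, truncConj G T (k * y i) ^ q) * k ^ (-q) := by
        gcongr
    _ = _ := by simp only [Pi.smul_apply, smul_eq_mul]; ring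

theorem dotProduct_sub_orliczDual_le (hG : IsOrliczFunction G) (hT0 : 0 ≤ T) (hT : 1 < G T)
    (hpq : p.HolderConjugate q) (hx : 0 ≤ x) (hy : 0 ≤ y) (hα : 0 < α)
    (hsum : ∑ i, G (x i / α) ≤ 1) : x ⬝ᵥ y - orliczDual G T q y ≤ (n + 1) * α ^ p := by
  have hB := hG.dotProduct_rpow_div_le_orliczDual hT0 hT hpq.symm.lt.le hx hy hα hsum
  have hq₁ : q * (p - 1) = p := by rw [mul_comm, hpq.sub_one_mul_conj]
  have hq₂ : (q - 1) * (p - 1) = 1 := by linear_combination hpq.sub_one_mul_conj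
  calc x ⬝ᵥ y - orliczDual G T q y
      ≤ x ⬝ᵥ y - (x ⬝ᵥ y) ^ q / (α ^ q * (n + 1) ^ (q - 1)) := by linarith
    _ ≤ (α ^ q * (n + 1) ^ (q - 1)) ^ (p - 1) :=
        sub_rpow_div_le hpq (dotProduct_nonneg_of_nonneg hx hy) (by positivity)
    _ = (n + 1) * α ^ p := by
        rw [mul_rpow (by positivity) (by positivity), ← rpow_mul hα.le, ← rpow_mul (by positivity),
          hq₁, hq₂, rpow_one, mul_comm]

theorem exists_dotProduct_sub_orliczDual_le (hG : IsOrliczFunction G) (hT0 : 0 ≤ T) (hT : 1 < G T)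
    (hpq : p.HolderConjugate q) (hx : 0 ≤ x) :
    ∃ C, ∀ y, 0 ≤ y → x ⬝ᵥ y - orliczDual G T q y ≤ C := by
  obtain ⟨α, hα, hsum⟩ := hG.exists_sum_le_one hx
  exact ⟨_, fun y hy => hG.dotProduct_sub_orliczDual_le hT0 hT hpq hx hy hα hsum⟩

theorem orliczEnvelope_le (hG : IsOrliczFunction G) (hT0 : 0 ≤ T) (hT : 1 < G T)
    (hpq : p.HolderConjugate q) (hx : 0 ≤ x) (hα : 0 < α) (hsum : ∑ i, G (x i / α) ≤ 1) :
    orliczEnvelope G T q x ≤ (n + 1) * α ^ p :=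
  orthantConj_le fun _ hy => hG.dotProduct_sub_orliczDual_le hT0 hT hpq hx hy hα hsum

theorem orliczEnvelope_nonneg (hG : IsOrliczFunction G) (hT0 : 0 ≤ T) (hT : 1 < G T)
    (hpq : p.HolderConjugate q) (hx : 0 ≤ x) : 0 ≤ orliczEnvelope G T q x := by
  have h := le_orthantConj (hG.exists_dotProduct_sub_orliczDual_le hT0 hT hpq hx) le_rfl
  rwa [dotProduct_zero, (hG.posHomogeneousOn_orliczDual hT0).map_zero hpq.symm.pos self_mem_Ici,
    sub_zero] at h

theorem rpow_le_orliczEnvelope (hG : IsOrliczFunction G) (hT0 : 0 ≤ T) (hT : 1 < G T)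
    (hpq : p.HolderConjugate q) (hp : 2 ≤ p) (hx : 0 ≤ x) (hα : 0 < α)
    (hsum : 1 ≤ ∑ i, G (x i / α)) : (α / 10) ^ p ≤ orliczEnvelope G T q x := by
  have hq2 : q ≤ 2 := by
    rw [hpq.conjugate_eq, div_le_iff₀ hpq.sub_one_pos]; linarith
  have hz : ∀ i, 0 ≤ x i / α := fun i => div_nonneg (hx i) hα.le
  set y : Fin n → ℝ := fun i => chordSlope G (x i / α)
  set W := ∑ i, (G (2 * (x i / α)) - G (x i / α))
  have hW : 1 ≤ W := hsum.trans (Finset.sum_le_sum fun i _ => by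
    linarith [hG.two_mul_le_apply_two_mul (hz i)])
  have hy : 0 ≤ y := fun i => hG.chordSlope_nonneg (hz i)
  have hxy : x ⬝ᵥ y = α * W := by
    simp only [dotProduct, W, Finset.mul_sum, ← mul_chordSlope, y]
    exact Finset.sum_congr rfl fun i _ => by field_simp
  have hφ : ∑ i, truncConj G T (y i) ≤ 2 * W := by
    rw [Finset.mul_sum]
    exact Finset.sum_le_sum fun i _ => hG.truncConj_chordSlope_le hT0 (hz i)
  set r := (α / 10) ^ (p - 1) / W
  have hr : 0 < r := by positivity
  have hrW : r * W = (α / 10) ^ (p - 1) := div_mul_cancel₀ _ (by linarith)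
  have hB := hG.orliczDual_smul_le hT0 hpq.symm.lt.le hq2 hy hW hφ hr
  have hF := le_orthantConj (hG.exists_dotProduct_sub_orliczDual_le hT0 hT hpq hx)
    (smul_nonneg hr.le hy)
  rw [dotProduct_smul, hxy, smul_eq_mul] at hF
  have e₁ : r * (α * W) = 10 * (α / 10) ^ p := by
    rw [mul_left_comm, hrW, rpow_sub_one (by positivity)]
    field_simp
  have e₂ : (r * W) ^ q = (α / 10) ^ p := by
    rw [hrW, ← rpow_mul (by positivity), hpq.sub_one_mul_conj]
  have : 0 ≤ (α / 10) ^ p := by positivity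
  unfold orliczEnvelope
  linarith

theorem orliczNorm_le_mul_rpow_inv_orliczEnvelope (hG : IsOrliczFunction G) (hT0 : 0 ≤ T)
    (hT : 1 < G T) (hpq : p.HolderConjugate q) (hp : 2 ≤ p) (hx : 0 ≤ x) :
    orliczNorm G x ≤ 10 * orliczEnvelope G T q x ^ p⁻¹ := by
  have hF := hG.orliczEnvelope_nonneg hT0 hT hpq hx
  refine orliczNorm_le (by positivity) fun α hα hsum => ?_
  have h := rpow_le_rpow (by positivity) (hG.rpow_le_orliczEnvelope hT0 hT hpq hp hx hα hsum.le)
    hpq.inv_nonneg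
  rw [rpow_rpow_inv (by positivity) hpq.ne_zero] at h
  linarith

theorem rpow_inv_orliczEnvelope_le (hG : IsOrliczFunction G) (hT0 : 0 ≤ T) (hT : 1 < G T)
    (hpq : p.HolderConjugate q) (hx : 0 ≤ x) :
    orliczEnvelope G T q x ^ p⁻¹ ≤ (n + 1) ^ p⁻¹ * orliczNorm G x := by
  rw [← div_le_iff₀' (by positivity)]
  refine hG.le_orliczNorm hx fun α hα hsum => ?_
  rw [div_le_iff₀' (by positivity)]
  calc orliczEnvelope G T q x ^ p⁻¹ ≤ ((n + 1) * α ^ p) ^ p⁻¹ :=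
        rpow_le_rpow (hG.orliczEnvelope_nonneg hT0 hT hpq hx)
          (hG.orliczEnvelope_le hT0 hT hpq hx hα hsum) hpq.inv_nonneg
    _ = (n + 1) ^ p⁻¹ * α := by
        rw [mul_rpow (by positivity) (by positivity), rpow_rpow_inv hα.le hpq.ne_zero]

end IsOrliczFunction

end OrliczEnvelope

theorem IsOrliczFunction.exists_isMonotoneNorm_isPSupermodular {n : ℕ} {G : ℝ → ℝ}
    (hG : IsOrliczFunction G) {p : ℝ} (hp : 2 ≤ p) :
    ∃ M : (Fin n → ℝ) → ℝ, IsMonotoneNorm M ∧ IsPSupermodular M p ∧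
      ∀ x, 0 ≤ x → orliczNorm G x ≤ M x ∧ M x ≤ 10 * (n + 1) ^ p⁻¹ * orliczNorm G x := by
  obtain ⟨T, hT, hT0⟩ :=
    ((hG.2.2.2.2.eventually_gt_atTop 1).and (Filter.eventually_ge_atTop 0)).exists
  have hpq := HolderConjugate.conjExponent (by linarith : 1 < p)
  set F : (Fin n → ℝ) → ℝ := orliczEnvelope G T (conjExponent p)
  have hB := fun (x : Fin n → ℝ) (hx : 0 ≤ x) =>
    hG.exists_dotProduct_sub_orliczDual_le hT0 hT hpq hx
  have hhom : PosHomogeneousOn (Ici 0) F p :=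
    posHomogeneousOn_orthantConj hB hpq (hG.posHomogeneousOn_orliczDual hT0)
  have hnn : ∀ x, 0 ≤ x → 0 ≤ F x := fun x hx => hG.orliczEnvelope_nonneg hT0 hT hpq hx
  have hpos : ∀ x, 0 ≤ x → x ≠ 0 → 0 < F x := fun x hx hx0 => by
    obtain ⟨α, hα, hsum⟩ := hG.exists_one_le_sum hx hx0
    exact (rpow_pos_of_pos (by positivity) p).trans_le
      (hG.rpow_le_orliczEnvelope hT0 hT hpq hp hx hα hsum)
  have hN := isMonotoneNorm_rpow_inv_comp_abs hpq.pos (convexOn_orthantConj hB) hhom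
    (monotoneOn_orthantConj hB) hpos
  have hS := isPSupermodular_rpow_inv_comp_abs hpq.pos hnn fun u v w hu hv hw =>
    orthantConj_add_sub_le hB
      (fun _ _ hy hz => hG.orliczDual_sup_add_inf_le hT0 hpq.symm.lt.le hy hz) hu hv hw
  refine ⟨fun x => 10 * F |x| ^ p⁻¹, hN.const_mul (by norm_num),
    hS.const_mul (fun x _ => rpow_nonneg (hnn _ (abs_nonneg x)) _) (by norm_num),
    fun x hx => ?_⟩
  simp only [abs_of_nonneg hx, mul_assoc]
  exact ⟨hG.orliczNorm_le_mul_rpow_inv_orliczEnvelope hT0 hT hpq hp hx,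
    by gcongr; exact hG.rpow_inv_orliczEnvelope_le hT0 hT hpq hx⟩

theorem add_one_rpow_inv_two_mul_logb_le {n : ℝ} (hn : 2 ≤ n) :
    (n + 1) ^ (2 * logb 2 n)⁻¹ ≤ 2 := by
  have hp : 0 < 2 * logb 2 n := mul_pos two_pos (logb_pos one_lt_two (by linarith))
  have h : n + 1 ≤ 2 ^ (2 * logb 2 n) := by
    rw [mul_comm, rpow_mul zero_le_two, rpow_logb two_pos (by norm_num) (by linarith), rpow_two]
    nlinarith
  calc (n + 1) ^ (2 * logb 2 n)⁻¹ ≤ (2 ^ (2 * logb 2 n)) ^ (2 * logb 2 n)⁻¹ := by gcongr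
    _ = 2 := rpow_rpow_inv zero_le_two hp.ne'

/-- Every Orlicz norm on ℝⁿ (n ≥ 2) can be `O(1)`-approximated by an `O(log n)`-supermodular
monotone norm. -/
theorem orliczNorm_supermodular_approx :
    ∃ C₁ C₂ : ℝ, 1 ≤ C₁ ∧ 1 ≤ C₂ ∧ ∀ n : ℕ, 2 ≤ n →
      ∀ G : ℝ → ℝ, IsOrliczFunction G →
        ∃ M : (Fin n → ℝ) → ℝ, IsMonotoneNorm M ∧
          IsPSupermodular M (C₁ * Real.logb 2 n) ∧
          ∀ x : Fin n → ℝ, 0 ≤ x → orliczNorm G x ≤ M x ∧ M x ≤ C₂ * orliczNorm G x := by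
  refine ⟨2, 20, by norm_num, by norm_num, fun n hn G hG => ?_⟩
  have hn' : (2 : ℝ) ≤ n := by exact_mod_cast hn
  have hlog : 1 ≤ logb 2 n := by
    rwa [le_logb_iff_rpow_le one_lt_two (by linarith), rpow_one]
  obtain ⟨M, hM, hMp, hMx⟩ :=
    hG.exists_isMonotoneNorm_isPSupermodular (n := n) (by linarith : 2 ≤ 2 * logb 2 n)
  refine ⟨M, hM, hMp, fun x hx => ⟨(hMx x hx).1, (hMx x hx).2.trans ?_⟩⟩
  have := add_one_rpow_inv_two_mul_logb_le hn'
  have := orliczNorm_nonneg G x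
  nlinarith
end
end

section
/- Let p ≥ 1, n ≥ 1, and let N be a monotone norm on ℝⁿ that is differentiable at every point of the nonnegative orthant except the origin. Then N is p-supermodular if and only if for all u ∈ ℝⁿ₊ with u ≠ 0, all v ∈ ℝⁿ₊, and every coordinate i ∈ {1,…,n}, the partial derivative of x ↦ N(x)^p satisfies ∂_i(N^p)(u+v) ≥ ∂_i(N^p)(u). -/
noncomputable section

private lemma mn_nonneg {n : ℕ} {N : (Fin n → ℝ) → ℝ} (hN : IsMonotoneNorm N)
    (x : Fin n → ℝ) : 0 ≤ N x := by
  have h0 : N 0 = 0 := by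
    have := hN.2.1 0 0
    simpa using this
  have h1 : N (-x) = N x := by
    have := hN.2.1 (-1) x
    simpa using this
  have h2 := hN.1 x (-x)
  have hx : x + -x = 0 := by abel
  rw [hx, h0, h1] at h2
  linarith

private lemma add_ne {n : ℕ} {u v : Fin n → ℝ} (hu : 0 ≤ u) (hune : u ≠ 0) (hv : 0 ≤ v) :
    u + v ≠ 0 := by
  intro h
  apply hune
  have h1 : u ≤ u + v := le_add_of_nonneg_right hv
  exact le_antisymm (h ▸ h1) hu

private lemma single_nonneg' {n : ℕ} (i : Fin n) : (0 : Fin n → ℝ) ≤ Pi.single i 1 := by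
  intro j
  by_cases h : j = i <;> simp [Pi.single_apply, h]

/-- line derivative of `N ^ p` along direction `w` starting at `a`. -/
private lemma line_deriv {n : ℕ} {N : (Fin n → ℝ) → ℝ} {p : ℝ} (hp : 1 ≤ p)
    (hdiff : ∀ x : Fin n → ℝ, 0 ≤ x → x ≠ 0 → DifferentiableAt ℝ N x)
    (a w : Fin n → ℝ) (t : ℝ) (ha : 0 ≤ a) (hw : 0 ≤ w) (hane : a ≠ 0) (ht : 0 ≤ t) :
    HasDerivAt (fun s : ℝ => N (a + s • w) ^ p)
      (fderiv ℝ (fun x => N x ^ p) (a + t • w) w) t := by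
  have hc : (0 : Fin n → ℝ) ≤ a + t • w := add_nonneg ha (smul_nonneg ht hw)
  have hcne : a + t • w ≠ 0 := add_ne ha hane (smul_nonneg ht hw)
  have hdF : DifferentiableAt ℝ (fun x => N x ^ p) (a + t • w) :=
    (hdiff _ hc hcne).rpow_const (Or.inr hp)
  have h1 : HasDerivAt (fun s : ℝ => a + s • w) w t := by
    simpa using ((hasDerivAt_id t).smul_const w).const_add a
  exact hdF.hasFDerivAt.comp_hasDerivAt t h1

/-- A nonnegative combination of coordinate directional derivative inequalities. -/
private lemma dir_mono {n : ℕ} {N : (Fin n → ℝ) → ℝ} {p : ℝ}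
    (H : ∀ (u v : Fin n → ℝ), 0 ≤ u → u ≠ 0 → 0 ≤ v → ∀ i : Fin n,
        fderiv ℝ (fun x => N x ^ p) u (Pi.single i 1) ≤
          fderiv ℝ (fun x => N x ^ p) (u + v) (Pi.single i 1))
    (a v w : Fin n → ℝ) (ha : 0 ≤ a) (hane : a ≠ 0) (hv : 0 ≤ v) (hw : 0 ≤ w) :
    fderiv ℝ (fun x => N x ^ p) a w ≤ fderiv ℝ (fun x => N x ^ p) (a + v) w := by
  have hws : w = ∑ i, w i • (Pi.single i 1 : Fin n → ℝ) := by
    conv_lhs => rw [← Finset.univ_sum_single w]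
    refine Finset.sum_congr rfl fun i _ => ?_
    ext j
    by_cases h : j = i <;> simp [Pi.single_apply, h]
  rw [hws, map_sum, map_sum]
  refine Finset.sum_le_sum fun i _ => ?_
  rw [map_smul, map_smul, smul_eq_mul, smul_eq_mul]
  exact mul_le_mul_of_nonneg_left (H a v ha hane hv i) (hw i)

/-- Gradient characterization of `p`-supermodularity: a differentiable monotone norm is
`p`-supermodular iff the gradient of `N^p` is monotone over the nonnegative orthant. -/
theorem pSupermodular_iff_gradient_monotone {n : ℕ} (hn : 1 ≤ n) (p : ℝ) (hp : 1 ≤ p)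
    (N : (Fin n → ℝ) → ℝ) (hN : IsMonotoneNorm N)
    (hdiff : ∀ x : Fin n → ℝ, 0 ≤ x → x ≠ 0 → DifferentiableAt ℝ N x) :
    IsPSupermodular N p ↔
      ∀ (u v : Fin n → ℝ), 0 ≤ u → u ≠ 0 → 0 ≤ v → ∀ i : Fin n,
        fderiv ℝ (fun x => N x ^ p) u (Pi.single i 1) ≤
          fderiv ℝ (fun x => N x ^ p) (u + v) (Pi.single i 1) := by
  have hp0 : (0 : ℝ) < p := lt_of_lt_of_le one_pos hp
  have hNnn : ∀ x, 0 ≤ N x := mn_nonneg hN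
  constructor
  · -- supermodular → gradient monotone
    intro hsup u v hu hune hv i
    have huv : (0 : Fin n → ℝ) ≤ u + v := add_nonneg hu hv
    have huvne : u + v ≠ 0 := add_ne hu hune hv
    have hee : (0 : Fin n → ℝ) ≤ Pi.single i 1 := single_nonneg' i
    have hphi := line_deriv hp hdiff u (Pi.single i 1) 0 hu hee hune le_rfl
    have hpsi := line_deriv hp hdiff (u + v) (Pi.single i 1) 0 huv hee huvne le_rfl
    rw [show u + (0 : ℝ) • (Pi.single i 1 : Fin n → ℝ) = u by simp] at hphi
    rw [show u + v + (0 : ℝ) • (Pi.single i 1 : Fin n → ℝ) = u + v by simp] at hpsi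
    have t1 := hphi.hasDerivWithinAt (s := Set.Ioi (0:ℝ))
    have t2 := hpsi.hasDerivWithinAt (s := Set.Ioi (0:ℝ))
    rw [hasDerivWithinAt_iff_tendsto_slope,
      Set.diff_singleton_eq_self Set.notMem_Ioi_self] at t1 t2
    refine le_of_tendsto_of_tendsto t1 t2 ?_
    filter_upwards [eventually_mem_nhdsWithin] with t ht
    have ht0 : (0:ℝ) < t := ht
    have hsm := hsup u v (t • (Pi.single i 1 : Fin n → ℝ)) hu hv (smul_nonneg ht0.le hee)
    rw [slope_def_field, slope_def_field, sub_zero]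
    have h1 : (fun s : ℝ => N (u + s • (Pi.single i 1 : Fin n → ℝ)) ^ p) 0 = N u ^ p := by simp
    have h2 : (fun s : ℝ => N (u + v + s • (Pi.single i 1 : Fin n → ℝ)) ^ p) 0 = N (u + v) ^ p := by
      simp
    simp only [h1, h2]
    exact (div_le_div_iff_of_pos_right ht0).mpr hsm
  · -- gradient monotone → supermodular
    intro H u v w hu hv hw
    -- key case: u ≠ 0
    have key : ∀ u : Fin n → ℝ, 0 ≤ u → u ≠ 0 →
        N (u + w) ^ p - N u ^ p ≤ N (u + v + w) ^ p - N (u + v) ^ p := by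
      intro u hu hune
      have hder : ∀ t : ℝ, 0 ≤ t →
          HasDerivAt (fun t : ℝ => N (u + v + t • w) ^ p - N (u + t • w) ^ p)
            (fderiv ℝ (fun x => N x ^ p) (u + v + t • w) w -
              fderiv ℝ (fun x => N x ^ p) (u + t • w) w) t := by
        intro t ht
        exact (line_deriv hp hdiff (u + v) w t (add_nonneg hu hv) hw (add_ne hu hune hv) ht).sub
          (line_deriv hp hdiff u w t hu hw hune ht)
      have hmon : MonotoneOn (fun t : ℝ => N (u + v + t • w) ^ p - N (u + t • w) ^ p)
          (Set.Icc 0 1) := by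
        apply monotoneOn_of_deriv_nonneg (convex_Icc 0 1)
        · intro t ht
          exact ((hder t ht.1).continuousAt).continuousWithinAt
        · intro t ht
          rw [interior_Icc] at ht
          exact ((hder t ht.1.le).differentiableAt).differentiableWithinAt
        · intro t ht
          rw [interior_Icc] at ht
          rw [(hder t ht.1.le).deriv]
          have ha : (0 : Fin n → ℝ) ≤ u + t • w := add_nonneg hu (smul_nonneg ht.1.le hw)
          have hane : u + t • w ≠ 0 := add_ne hu hune (smul_nonneg ht.1.le hw)
          have hd := dir_mono H (u + t • w) v w ha hane hv hw
          rw [show u + t • w + v = u + v + t • w by abel] at hd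
          linarith
      have h01 := hmon (Set.left_mem_Icc.mpr zero_le_one) (Set.right_mem_Icc.mpr zero_le_one)
        zero_le_one
      simp only [zero_smul, add_zero, one_smul] at h01
      linarith
    by_cases hw0 : w = 0
    · subst hw0; simp
    by_cases hu0 : u = 0
    · subst hu0
      by_cases hv0 : v = 0
      · subst hv0; simp
      -- limit argument with u := ε • v
      have hvpos : 0 < N v := lt_of_le_of_ne (hNnn v) fun h => hv0 ((hN.2.2.1 v) h.symm)
      have hKey : ∀ ε : ℝ, 0 < ε →
          N (ε • v + w) ^ p - (ε * N v) ^ p ≤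
            N (ε • v + v + w) ^ p - ((ε + 1) * N v) ^ p := by
        intro ε hε
        have hεv : (0 : Fin n → ℝ) ≤ ε • v := smul_nonneg hε.le hv
        have hεvne : ε • v ≠ 0 := smul_ne_zero hε.ne' hv0
        have := key (ε • v) hεv hεvne
        have e1 : N (ε • v) = ε * N v := by
          rw [hN.2.1 ε v, abs_of_pos hε]
        have e2 : N (ε • v + v) = (ε + 1) * N v := by
          rw [show ε • v + v = (ε + 1) • v by rw [add_smul, one_smul],
            hN.2.1, abs_of_pos (by linarith)]
        rw [e1, e2] at this
        exact this
      -- take the limit ε → 0⁺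
      have hwne : (0 : Fin n → ℝ) ≤ w := hw
      have hvw : (0 : Fin n → ℝ) ≤ v + w := add_nonneg hv hw
      have hvwne : v + w ≠ 0 := add_ne hv hv0 hw
      have hFw : ContinuousAt (fun x => N x ^ p) w :=
        ((hdiff w hw hw0).rpow_const (Or.inr hp)).continuousAt
      have hFvw : ContinuousAt (fun x => N x ^ p) (v + w) :=
        ((hdiff (v + w) hvw hvwne).rpow_const (Or.inr hp)).continuousAt
      have l1 : Filter.Tendsto (fun ε : ℝ => N (ε • v + w) ^ p) (nhdsWithin 0 (Set.Ioi 0))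
          (nhds (N w ^ p)) := by
        have hc : Filter.Tendsto (fun ε : ℝ => ε • v + w) (nhds 0) (nhds w) := by
          have : Continuous (fun ε : ℝ => ε • v + w) :=
            (continuous_id.smul continuous_const).add continuous_const
          have := this.tendsto 0
          simpa using this
        exact (hFw.tendsto.comp hc).mono_left nhdsWithin_le_nhds
      have l2 : Filter.Tendsto (fun ε : ℝ => (ε * N v) ^ p) (nhdsWithin 0 (Set.Ioi 0))
          (nhds 0) := by
        have hc : Filter.Tendsto (fun ε : ℝ => ε * N v) (nhds 0) (nhds 0) := by
          have : Continuous (fun ε : ℝ => ε * N v) := continuous_id.mul continuous_const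
          have := this.tendsto 0
          simpa using this
        have hr : ContinuousAt (fun x : ℝ => x ^ p) 0 :=
          Real.continuousAt_rpow_const 0 p (Or.inr hp0.le)
        have := hr.tendsto.comp hc
        rw [Real.zero_rpow hp0.ne'] at this
        exact this.mono_left nhdsWithin_le_nhds
      have l3 : Filter.Tendsto (fun ε : ℝ => N (ε • v + v + w) ^ p) (nhdsWithin 0 (Set.Ioi 0))
          (nhds (N (v + w) ^ p)) := by
        have hc : Filter.Tendsto (fun ε : ℝ => ε • v + v + w) (nhds 0) (nhds (v + w)) := by
          have : Continuous (fun ε : ℝ => ε • v + v + w) :=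
            ((continuous_id.smul continuous_const).add continuous_const).add continuous_const
          have := this.tendsto 0
          simpa using this
        exact (hFvw.tendsto.comp hc).mono_left nhdsWithin_le_nhds
      have l4 : Filter.Tendsto (fun ε : ℝ => ((ε + 1) * N v) ^ p) (nhdsWithin 0 (Set.Ioi 0))
          (nhds (N v ^ p)) := by
        have hc : Filter.Tendsto (fun ε : ℝ => (ε + 1) * N v) (nhds 0) (nhds (N v)) := by
          have : Continuous (fun ε : ℝ => (ε + 1) * N v) :=
            (continuous_id.add continuous_const).mul continuous_const
          have := this.tendsto 0
          simpa using this
        have hr : ContinuousAt (fun x : ℝ => x ^ p) (N v) :=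
          Real.continuousAt_rpow_const (N v) p (Or.inl hvpos.ne')
        exact (hr.tendsto.comp hc).mono_left nhdsWithin_le_nhds
      have hle := le_of_tendsto_of_tendsto (l1.sub l2) (l3.sub l4)
        (by filter_upwards [eventually_mem_nhdsWithin] with ε hε
            exact hKey ε hε)
      have h00 : N 0 = 0 := by
        have := hN.2.1 0 0
        simpa using this
      simpa [h00, Real.zero_rpow hp0.ne'] using hle
    · exact key u hu hu0
end
end

section
/- Let p ≥ 1, n ≥ 1, and let N be a monotone norm on ℝⁿ that is twice differentiable at every point of the nonnegative orthant except the origin. Then the following are equivalent: (i) N is p-supermodular; (ii) ∂²_{ij}(N^p)(u) ≥ 0 for all u ∈ ℝⁿ₊ with u ≠ 0 and all coordinates i, j; (iii) ∂²_{ij}N(u) ≥ −(p−1)·∂_iN(u)·∂_jN(u)/N(u) for all u ∈ ℝⁿ₊ with u ≠ 0 and all coordinates i, j. -/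
/-!
`IsPSupermodular N p` is supermodularity of `F = N ^ p` on the nonnegative orthant. For a function
that is `C²` on the punctured orthant, supermodularity, monotonicity of the directional derivatives
`∂ᵥF` (`v ≥ 0`) and entrywise nonnegativity of the Hessian are equivalent: difference quotients of
the supermodular inequality converge to the derivatives, and conversely the mean value theorem
along segments integrates monotone derivatives back to the inequality. The origin, where `F` need
not be differentiable, is reached by continuity, since a norm is convex and hence continuous.
Finally `∂²ᵢⱼ(N ^ p) = p N ^ (p - 1) (∂²ᵢⱼN + (p - 1) ∂ᵢN ∂ⱼN / N)` gives the second equivalence.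
-/

noncomputable section

/-- Partial derivative `∂ᵢ F` at `x`. -/
def pderiv {n : ℕ} (F : (Fin n → ℝ) → ℝ) (i : Fin n) (x : Fin n → ℝ) : ℝ :=
  fderiv ℝ F x (Pi.single i 1)

/-- Second partial derivative `∂²ᵢⱼ F` at `x`. -/
def pderiv2 {n : ℕ} (F : (Fin n → ℝ) → ℝ) (i j : Fin n) (x : Fin n → ℝ) : ℝ :=
  fderiv ℝ (fun y => fderiv ℝ F y (Pi.single j 1)) x (Pi.single i 1)

open Filter Topology

section Calculus

variable {E : Type*} [NormedAddCommGroup E] [NormedSpace ℝ E]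

theorem ContDiffAt.differentiableAt_fderiv {F : E → ℝ} {x : E} (hF : ContDiffAt ℝ 2 F x) :
    DifferentiableAt ℝ (fderiv ℝ F) x :=
  (hF.fderiv_right (m := 1) (by norm_num)).differentiableAt one_ne_zero

theorem ContDiffAt.differentiableAt_fderiv_apply {F : E → ℝ} {x : E} (hF : ContDiffAt ℝ 2 F x)
    (v : E) : DifferentiableAt ℝ (fun y => fderiv ℝ F y v) x :=
  hF.differentiableAt_fderiv.clm_apply (differentiableAt_const v)

theorem DifferentiableAt.hasDerivAt_comp_add_smul {F : E → ℝ} {x v : E} {t : ℝ}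
    (hF : DifferentiableAt ℝ F (x + t • v)) :
    HasDerivAt (fun s : ℝ => F (x + s • v)) (fderiv ℝ F (x + t • v) v) t := by
  have := hF.hasFDerivAt.comp_hasDerivAt t (((hasDerivAt_id t).smul_const v).const_add x)
  simp only [id, one_smul] at this
  exact this

theorem fderiv_fderiv_apply {F : E → ℝ} {x : E} (hF : ContDiffAt ℝ 2 F x) (v w : E) :
    fderiv ℝ (fun y => fderiv ℝ F y w) x v = fderiv ℝ (fderiv ℝ F) x v w := by
  rw [fderiv_clm_apply hF.differentiableAt_fderiv (differentiableAt_const w)]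
  simp

end Calculus

theorem monotoneOn_Ici_of_hasDerivAt_nonneg {f f' : ℝ → ℝ} {a : ℝ}
    (hf : ∀ t, a ≤ t → HasDerivAt f (f' t) t) (hf' : ∀ t, a ≤ t → 0 ≤ f' t) :
    MonotoneOn f (Set.Ici a) :=
  monotoneOn_of_hasDerivWithinAt_nonneg (convex_Ici a)
    (fun t ht => (hf t ht).continuousAt.continuousWithinAt)
    (fun t ht => (hf t (interior_subset ht)).hasDerivWithinAt)
    (fun t ht => hf' t (interior_subset ht))

theorem apply_nonneg_of_apply_single_nonneg {ι : Type*} [Fintype ι] [DecidableEq ι]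
    (L : (ι → ℝ) →L[ℝ] ℝ) (hL : ∀ i, 0 ≤ L (Pi.single i 1)) {v : ι → ℝ} (hv : 0 ≤ v) :
    0 ≤ L v := by
  rw [pi_eq_sum_univ' v, map_sum]
  exact Finset.sum_nonneg fun i _ => by
    rw [map_smul, smul_eq_mul]; exact mul_nonneg (hv i) (hL i)

theorem add_ne_zero_of_nonneg {M : Type*} [AddCommMonoid M] [PartialOrder M]
    [IsOrderedAddMonoid M] {a b : M} (ha : 0 ≤ a) (ha0 : a ≠ 0) (hb : 0 ≤ b) : a + b ≠ 0 :=
  fun h => ha0 (le_antisymm (h ▸ le_add_of_nonneg_right hb) ha)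

section Orthant

variable {n : ℕ}

def IsSupermodularOnOrthant (F : (Fin n → ℝ) → ℝ) : Prop :=
  ∀ u v w : Fin n → ℝ, 0 ≤ u → 0 ≤ v → 0 ≤ w → F (u + w) - F u ≤ F (u + v + w) - F (u + v)

def HasMonotoneFDerivOnOrthant (F : (Fin n → ℝ) → ℝ) : Prop :=
  ∀ a b v : Fin n → ℝ, 0 ≤ a → a ≠ 0 → 0 ≤ b → 0 ≤ v → fderiv ℝ F a v ≤ fderiv ℝ F (a + b) v

def HasNonnegHessianOnOrthant (F : (Fin n → ℝ) → ℝ) : Prop :=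
  ∀ u : Fin n → ℝ, 0 ≤ u → u ≠ 0 → ∀ i j : Fin n, 0 ≤ pderiv2 F i j u

variable {F : (Fin n → ℝ) → ℝ}

theorem IsSupermodularOnOrthant.hasMonotoneFDerivOnOrthant (hF : IsSupermodularOnOrthant F)
    (hd : ∀ x : Fin n → ℝ, 0 ≤ x → x ≠ 0 → DifferentiableAt ℝ F x) :
    HasMonotoneFDerivOnOrthant F := by
  intro a b v ha ha0 hb hv
  have hab := add_ne_zero_of_nonneg ha ha0 hb
  refine le_of_tendsto_of_tendsto
    ((hd a ha ha0).hasFDerivAt.hasLineDerivAt v).tendsto_slope_zero_right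
    ((hd _ (add_nonneg ha hb) hab).hasFDerivAt.hasLineDerivAt v).tendsto_slope_zero_right ?_
  filter_upwards [self_mem_nhdsWithin] with s (hs : 0 < s)
  exact smul_le_smul_of_nonneg_left (hF a b (s • v) ha hb (smul_nonneg hs.le hv))
    (inv_nonneg.2 hs.le)

theorem HasMonotoneFDerivOnOrthant.hasNonnegHessianOnOrthant (hF : HasMonotoneFDerivOnOrthant F)
    (h2 : ∀ x : Fin n → ℝ, 0 ≤ x → x ≠ 0 → ContDiffAt ℝ 2 F x) :
    HasNonnegHessianOnOrthant F := by
  intro u hu hu0 i j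
  refine ge_of_tendsto (((h2 u hu hu0).differentiableAt_fderiv_apply
    (Pi.single j 1)).hasFDerivAt.hasLineDerivAt (Pi.single i 1)).tendsto_slope_zero_right ?_
  filter_upwards [self_mem_nhdsWithin] with s (hs : 0 < s)
  have := hF u (s • Pi.single i 1) (Pi.single j 1) hu hu0
    (smul_nonneg hs.le (Pi.single_nonneg.2 zero_le_one)) (Pi.single_nonneg.2 zero_le_one)
  exact smul_nonneg (inv_nonneg.2 hs.le) (sub_nonneg.2 this)

theorem fderiv_fderiv_apply_nonneg {x : Fin n → ℝ} (h2 : ContDiffAt ℝ 2 F x)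
    (hF : ∀ i j, 0 ≤ pderiv2 F i j x) {v w : Fin n → ℝ} (hv : 0 ≤ v) (hw : 0 ≤ w) :
    0 ≤ fderiv ℝ (fun y => fderiv ℝ F y w) x v := by
  have hentry : ∀ i j, 0 ≤ fderiv ℝ (fderiv ℝ F) x (Pi.single i 1) (Pi.single j 1) :=
    fun i j => fderiv_fderiv_apply h2 _ _ ▸ hF i j
  rw [fderiv_fderiv_apply h2]
  refine apply_nonneg_of_apply_single_nonneg ((fderiv ℝ (fderiv ℝ F) x).flip w) (fun i => ?_) hv
  exact apply_nonneg_of_apply_single_nonneg _ (hentry i) hw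

theorem HasNonnegHessianOnOrthant.hasMonotoneFDerivOnOrthant (hF : HasNonnegHessianOnOrthant F)
    (h2 : ∀ x : Fin n → ℝ, 0 ≤ x → x ≠ 0 → ContDiffAt ℝ 2 F x) :
    HasMonotoneFDerivOnOrthant F := by
  intro a b v ha ha0 hb hv
  have hseg : ∀ t : ℝ, 0 ≤ t → 0 ≤ a + t • b ∧ a + t • b ≠ 0 := fun t ht =>
    ⟨add_nonneg ha (smul_nonneg ht hb), add_ne_zero_of_nonneg ha ha0 (smul_nonneg ht hb)⟩
  have hmono := monotoneOn_Ici_of_hasDerivAt_nonneg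
    (fun t ht => ((h2 _ (hseg t ht).1 (hseg t ht).2).differentiableAt_fderiv_apply v
      ).hasDerivAt_comp_add_smul)
    (fun t ht => fderiv_fderiv_apply_nonneg (h2 _ (hseg t ht).1 (hseg t ht).2)
      (hF _ (hseg t ht).1 (hseg t ht).2) hb hv)
  simpa using hmono Set.self_mem_Ici (Set.mem_Ici.2 zero_le_one) zero_le_one

theorem HasMonotoneFDerivOnOrthant.isSupermodularOnOrthant (hF : HasMonotoneFDerivOnOrthant F)
    (hc : Continuous F) (hd : ∀ x : Fin n → ℝ, 0 ≤ x → x ≠ 0 → DifferentiableAt ℝ F x) :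
    IsSupermodularOnOrthant F := by
  intro u v w hu hv hw
  set D : (Fin n → ℝ) → ℝ := fun u => F (u + v + w) - F (u + v) - (F (u + w) - F u) with hD
  suffices 0 ≤ D u by simpa [hD] using this
  have hpunct : ∀ u, 0 ≤ u → u ≠ 0 → 0 ≤ D u := by
    intro u hu hu0
    have hseg : ∀ t : ℝ, 0 ≤ t → 0 ≤ u + t • v ∧ u + t • v ≠ 0 := fun t ht =>
      ⟨add_nonneg hu (smul_nonneg ht hv), add_ne_zero_of_nonneg hu hu0 (smul_nonneg ht hv)⟩
    have hseg_add : ∀ t : ℝ, 0 ≤ t → 0 ≤ u + w + t • v ∧ u + w + t • v ≠ 0 := fun t ht => by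
      rw [add_right_comm]
      exact ⟨add_nonneg (hseg t ht).1 hw, add_ne_zero_of_nonneg (hseg t ht).1 (hseg t ht).2 hw⟩
    have hderiv : ∀ t : ℝ, 0 ≤ t →
        0 ≤ fderiv ℝ F (u + w + t • v) v - fderiv ℝ F (u + t • v) v := fun t ht => by
      rw [add_right_comm, sub_nonneg]
      exact hF _ w v (hseg t ht).1 (hseg t ht).2 hw hv
    have hmono := monotoneOn_Ici_of_hasDerivAt_nonneg
      (fun t ht => (hd _ (hseg_add t ht).1 (hseg_add t ht).2).hasDerivAt_comp_add_smul.sub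
        (hd _ (hseg t ht).1 (hseg t ht).2).hasDerivAt_comp_add_smul) hderiv
    have := hmono Set.self_mem_Ici (Set.mem_Ici.2 zero_le_one) zero_le_one
    simp only [Pi.sub_apply, zero_smul, add_zero, one_smul] at this
    rw [add_right_comm u w v] at this
    simp only [hD]
    linarith
  rcases eq_or_ne u 0 with rfl | hu0
  · rcases eq_or_ne (v + w) 0 with hvw | hvw
    · obtain ⟨rfl, rfl⟩ := (add_eq_zero_iff_of_nonneg hv hw).1 hvw
      simp [hD]
    · have hlim : Tendsto (fun ε : ℝ => D (ε • (v + w))) (𝓝[>] 0) (𝓝 (D 0)) := by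
        have : Continuous fun ε : ℝ => D (ε • (v + w)) := by simp only [hD]; fun_prop
        simpa using (this.tendsto 0).mono_left nhdsWithin_le_nhds
      exact ge_of_tendsto hlim (eventually_nhdsWithin_of_forall fun ε (hε : 0 < ε) =>
        hpunct _ (smul_nonneg hε.le (add_nonneg hv hw)) (smul_ne_zero hε.ne' hvw))
  · exact hpunct u hu hu0

theorem isSupermodularOnOrthant_iff_hasNonnegHessianOnOrthant (hc : Continuous F)
    (h2 : ∀ x : Fin n → ℝ, 0 ≤ x → x ≠ 0 → ContDiffAt ℝ 2 F x) :
    IsSupermodularOnOrthant F ↔ HasNonnegHessianOnOrthant F :=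
  have hd x hx hx0 := (h2 x hx hx0).differentiableAt two_ne_zero
  ⟨fun h => (h.hasMonotoneFDerivOnOrthant hd).hasNonnegHessianOnOrthant h2,
    fun h => (h.hasMonotoneFDerivOnOrthant h2).isSupermodularOnOrthant hc hd⟩

end Orthant

namespace IsMonotoneNorm

variable {n : ℕ} {N : (Fin n → ℝ) → ℝ}

theorem map_zero (hN : IsMonotoneNorm N) : N 0 = 0 := by
  simpa using hN.2.1 0 0

theorem nonneg (hN : IsMonotoneNorm N) (x : Fin n → ℝ) : 0 ≤ N x := by
  have h := hN.1 x (-x)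
  rw [add_neg_cancel, hN.map_zero, ← neg_one_smul ℝ x, hN.2.1, abs_neg, abs_one, one_mul] at h
  linarith

theorem pos (hN : IsMonotoneNorm N) {x : Fin n → ℝ} (hx : x ≠ 0) : 0 < N x :=
  (hN.nonneg x).lt_of_ne fun h => hx (hN.2.2.1 x h.symm)

theorem convexOn (hN : IsMonotoneNorm N) : ConvexOn ℝ Set.univ N := by
  refine ⟨convex_univ, fun x _ y _ a b ha hb _ => ?_⟩
  calc N (a • x + b • y) ≤ N (a • x) + N (b • y) := hN.1 _ _
    _ = a • N x + b • N y := by rw [hN.2.1, hN.2.1, abs_of_nonneg ha, abs_of_nonneg hb]; rfl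

theorem continuous (hN : IsMonotoneNorm N) : Continuous N :=
  continuousOn_univ.1 (hN.convexOn.continuousOn isOpen_univ)

end IsMonotoneNorm

section PartialDerivatives

variable {n : ℕ} {F G : (Fin n → ℝ) → ℝ} {x : Fin n → ℝ}

theorem pderiv_rpow_const (hF : DifferentiableAt ℝ F x) (hx : F x ≠ 0) (p : ℝ) (i : Fin n) :
    pderiv (fun y => F y ^ p) i x = p * F x ^ (p - 1) * pderiv F i x := by
  simp [pderiv, (hF.hasFDerivAt.rpow_const (Or.inl hx)).fderiv]

theorem pderiv_mul (hF : DifferentiableAt ℝ F x) (hG : DifferentiableAt ℝ G x) (i : Fin n) :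
    pderiv (fun y => F y * G y) i x = pderiv F i x * G x + F x * pderiv G i x := by
  rw [pderiv, fderiv_fun_mul hF hG]
  simp only [add_apply, smul_apply, smul_eq_mul, pderiv]
  ring

theorem pderiv_const_mul (hF : DifferentiableAt ℝ F x) (c : ℝ) (i : Fin n) :
    pderiv (fun y => c * F y) i x = c * pderiv F i x := by
  simp [pderiv, fderiv_const_mul hF]

theorem pderiv2_rpow_const (hF : ContDiffAt ℝ 2 F x) (hx : F x ≠ 0) (p : ℝ) (i j : Fin n) :
    pderiv2 (fun y => F y ^ p) i j x = p * F x ^ (p - 1) *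
      (pderiv2 F i j x + (p - 1) * pderiv F i x * pderiv F j x / F x) := by
  have hd := hF.differentiableAt two_ne_zero
  have hev : (fun y => pderiv (fun z => F z ^ p) j y) =ᶠ[𝓝 x]
      fun y => p * F y ^ (p - 1) * pderiv F j y := by
    filter_upwards [hF.eventually (by simp), hF.continuousAt.eventually_ne hx] with y hy hy0
    exact pderiv_rpow_const (hy.differentiableAt two_ne_zero) hy0 p j
  calc pderiv2 (fun y => F y ^ p) i j x
      = pderiv (fun y => p * F y ^ (p - 1) * pderiv F j y) i x := by
        rw [pderiv, ← hev.fderiv_eq]; rfl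
    _ = p * ((p - 1) * F x ^ (p - 1 - 1) * pderiv F i x) * pderiv F j x
          + p * F x ^ (p - 1) * pderiv2 F i j x := by
        rw [pderiv_mul (G := fun y => pderiv F j y) ((hd.rpow_const (Or.inl hx)).const_mul p)
          (hF.differentiableAt_fderiv_apply _), pderiv_const_mul (hd.rpow_const (Or.inl hx)),
          pderiv_rpow_const hd hx]
        rfl
    _ = _ := by
        rw [Real.rpow_sub_one hx (p - 1)]
        ring

theorem pderiv2_rpow_const_nonneg_iff (hF : ContDiffAt ℝ 2 F x) (hx : 0 < F x) {p : ℝ}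
    (hp : 0 < p) (i j : Fin n) :
    0 ≤ pderiv2 (fun y => F y ^ p) i j x ↔
      -((p - 1) * pderiv F i x * pderiv F j x / F x) ≤ pderiv2 F i j x := by
  rw [pderiv2_rpow_const hF hx.ne', mul_nonneg_iff_of_pos_left
    (mul_pos hp (Real.rpow_pos_of_pos hx _)), neg_le_iff_add_nonneg]

end PartialDerivatives

theorem pSupermodular_iff_hessian_general {n : ℕ} (p : ℝ) (hp : 1 ≤ p)
    (N : (Fin n → ℝ) → ℝ) (hN : IsMonotoneNorm N)
    (hdiff : ∀ x : Fin n → ℝ, 0 ≤ x → x ≠ 0 → ContDiffAt ℝ 2 N x) :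
    (IsPSupermodular N p ↔
      ∀ u : Fin n → ℝ, 0 ≤ u → u ≠ 0 → ∀ i j : Fin n,
        0 ≤ pderiv2 (fun x => N x ^ p) i j u) ∧
    ((∀ u : Fin n → ℝ, 0 ≤ u → u ≠ 0 → ∀ i j : Fin n,
        0 ≤ pderiv2 (fun x => N x ^ p) i j u) ↔
      ∀ u : Fin n → ℝ, 0 ≤ u → u ≠ 0 → ∀ i j : Fin n,
        -((p - 1) * pderiv N i u * pderiv N j u / N u) ≤ pderiv2 N i j u) := by
  have hp0 : 0 < p := by linarith
  have h2 : ∀ x : Fin n → ℝ, 0 ≤ x → x ≠ 0 → ContDiffAt ℝ 2 (fun y => N y ^ p) x :=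
    fun x hx hx0 => (hdiff x hx hx0).rpow_const_of_ne (hN.pos hx0).ne'
  refine ⟨isSupermodularOnOrthant_iff_hasNonnegHessianOnOrthant
    (hN.continuous.rpow_const fun _ => Or.inr hp0.le) h2, ?_⟩
  exact forall₃_congr fun u hu hu0 => forall₂_congr fun i j =>
    pderiv2_rpow_const_nonneg_iff (hdiff u hu hu0) (hN.pos hu0) hp0 i j

/-- Hessian characterization of `p`-supermodularity for a twice differentiable monotone norm:
`N` is `p`-supermodular iff the Hessian of `N^p` is (entrywise) nonnegative on the nonnegative
orthant, iff `∂²ᵢⱼN(u) ≥ −(p−1)·∂ᵢN(u)·∂ⱼN(u)/N(u)` there. -/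
theorem pSupermodular_iff_hessian {n : ℕ} (hn : 1 ≤ n) (p : ℝ) (hp : 1 ≤ p)
    (N : (Fin n → ℝ) → ℝ) (hN : IsMonotoneNorm N)
    (hdiff : ∀ x : Fin n → ℝ, 0 ≤ x → x ≠ 0 → ContDiffAt ℝ 2 N x) :
    (IsPSupermodular N p ↔
      ∀ u : Fin n → ℝ, 0 ≤ u → u ≠ 0 → ∀ i j : Fin n,
        0 ≤ pderiv2 (fun x => N x ^ p) i j u) ∧
    ((∀ u : Fin n → ℝ, 0 ≤ u → u ≠ 0 → ∀ i j : Fin n,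
        0 ≤ pderiv2 (fun x => N x ^ p) i j u) ↔
      ∀ u : Fin n → ℝ, 0 ≤ u → u ≠ 0 → ∀ i j : Fin n,
        -((p - 1) * pderiv N i u * pderiv N j u / N u) ≤ pderiv2 N i j u) :=
  pSupermodular_iff_hessian_general p hp N hN hdiff
end
end

section
/- There is a constant c > 0 such that for every n ≥ 2 and every p ≥ 1: if the monotone norm N on ℝⁿ defined by N(x) = ‖x‖₁ + ‖x‖₂ is p-supermodular, then p ≥ c·√n. -/
/-!
With `t = √(n - 2)`, take `u = (0, 0, 1/t, …, 1/t)`, `v = e₀` and `w = e₁`. Then `N u = t + 1`,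
`N (u + v) = N (u + w) = t + 1 + √2` and `N (u + v + w) = t + 2 + √3`, so `p`-supermodularity
asks the increment of `x ↦ x ^ p` over `[t + 1 + √2, t + 2 + √3]`, an interval of length
`1 + √3 - √2`, to be at least its increment over `[t + 1, t + 1 + √2]`, of length `√2`.
By convexity the ratio of the two increments is at most
`(1 + √3 - √2) / √2 · ((t + 2 + √3) / (t + 1)) ^ (p - 1)`, which stays below `1` as long as
`p` is a small multiple of `t`.
-/

open Real Matrix

noncomputable section

def l1PlusL2 {n : ℕ} (x : Fin n → ℝ) : ℝ := (∑ i, |x i|) + √(∑ i, x i ^ 2)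

theorem rpow_add_mul_sub_le_rpow {p x y : ℝ} (hp : 1 ≤ p) (hy : 0 < y) (hx : 0 ≤ x) :
    y ^ p + p * y ^ (p - 1) * (x - y) ≤ x ^ p := by
  have hbern := one_add_mul_self_le_rpow_one_add (s := x / y - 1) (by
    have : 0 ≤ x / y := by positivity
    linarith) hp
  rw [add_sub_cancel, div_rpow hx hy.le, le_div_iff₀ (by positivity)] at hbern
  rw [rpow_sub_one hy.ne']
  calc y ^ p + p * (y ^ p / y) * (x - y) = (1 + p * (x / y - 1)) * y ^ p := by field_simp
    _ ≤ x ^ p := hbern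

theorem one_add_rpow_le_inv_one_sub_mul {q s : ℝ} (hq : 0 ≤ q) (hs : 0 ≤ s) (hqs : q * s < 1) :
    (1 + s) ^ q ≤ 1 / (1 - q * s) :=
  calc (1 + s) ^ q ≤ exp s ^ q :=
        rpow_le_rpow (by positivity) (by linarith [add_one_le_exp s]) hq
    _ = exp (q * s) := by rw [← exp_mul, mul_comm]
    _ ≤ 1 / (1 - q * s) := exp_bound_div_one_sub_of_interval (by positivity) hqs

theorem rpow_add_rpow_lt_two_mul_rpow {p X a b : ℝ} (hp : 1 ≤ p) (hX : 0 < X) (ha : 0 ≤ a)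
    (hb : 0 ≤ b) (h : b * (X + a + b) ^ (p - 1) < a * X ^ (p - 1)) :
    X ^ p + (X + a + b) ^ p < 2 * (X + a) ^ p := by
  have h₁ := rpow_add_mul_sub_le_rpow hp hX (x := X + a) (by positivity)
  have h₂ := rpow_add_mul_sub_le_rpow hp (y := X + a + b) (by positivity) (x := X + a)
    (by positivity)
  nlinarith [mul_lt_mul_of_pos_left h (by linarith : 0 < p)]

theorem one_add_sqrt_three_sub_sqrt_two_mul_rpow_lt {p t : ℝ} (hp : 1 ≤ p) (hpt : 60 * p ≤ t) :
    (1 + √3 - √2) * (t + 1 + √2 + (1 + √3 - √2)) ^ (p - 1) < √2 * (t + 1) ^ (p - 1) := by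
  have h2 : 1.414 ≤ √2 := by nlinarith [sq_sqrt (zero_le_two : (0:ℝ) ≤ 2), sqrt_nonneg 2]
  have h2' : √2 ≤ 1.415 := by nlinarith [sq_sqrt (zero_le_two : (0:ℝ) ≤ 2), sqrt_nonneg 2]
  have h3 : √3 ≤ 1.7321 := by nlinarith [sq_sqrt (zero_le_three : (0:ℝ) ≤ 3), sqrt_nonneg 3]
  have h3' : 1.732 ≤ √3 := by nlinarith [sq_sqrt (zero_le_three : (0:ℝ) ≤ 3), sqrt_nonneg 3]
  have hX : 0 < t + 1 := by linarith
  set s := (1 + √3) / (t + 1)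
  -- `√2 / (1 + √3 - √2) > 1.07`, while `(p - 1) * s ≤ 1 / 20` keeps `(1 + s) ^ (p - 1) ≤ 20 / 19`.
  have hqs : (p - 1) * s ≤ 0.05 := by
    rw [mul_div_assoc', div_le_iff₀ hX]
    nlinarith [sqrt_nonneg 3]
  have hs : 0 ≤ s := by positivity
  have hfac : t + 1 + √2 + (1 + √3 - √2) = (t + 1) * (1 + s) := by
    simp only [s]; field_simp; ring
  have hbound := one_add_rpow_le_inv_one_sub_mul (q := p - 1) (by linarith) hs (by linarith)
  rw [hfac, mul_rpow hX.le (by positivity)]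
  have hXq : 0 < (t + 1) ^ (p - 1) := by positivity
  calc (1 + √3 - √2) * ((t + 1) ^ (p - 1) * (1 + s) ^ (p - 1))
      ≤ (1 + √3 - √2) * ((t + 1) ^ (p - 1) * (1 / (1 - (p - 1) * s))) := by
        gcongr
        linarith
    _ < √2 * (t + 1) ^ (p - 1) := by
        rw [← mul_assoc, mul_comm _ ((t + 1) ^ (p - 1)), mul_assoc, mul_comm √2]
        gcongr
        rw [mul_one_div, div_lt_iff₀ (by linarith)]
        nlinarith

theorem l1PlusL2_cons_cons_const {m : ℕ} {a b c : ℝ} (ha : 0 ≤ a) (hb : 0 ≤ b) (hc : 0 ≤ c) :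
    l1PlusL2 (vecCons a (vecCons b fun _ : Fin m => c)) =
      a + b + m * c + √(a ^ 2 + b ^ 2 + m * c ^ 2) := by
  simp [l1PlusL2, Fin.sum_univ_succ, abs_of_nonneg, ha, hb, hc, add_assoc]

theorem cons_cons_const_add {m : ℕ} (a b c a' b' c' : ℝ) :
    vecCons a (vecCons b fun _ : Fin m => c) + vecCons a' (vecCons b' fun _ => c') =
      vecCons (a + a') (vecCons (b + b') fun _ => c + c') := by
  rw [cons_add_cons, cons_add_cons]
  rfl

theorem cons_cons_const_nonneg {m : ℕ} {a b c : ℝ} (ha : 0 ≤ a) (hb : 0 ≤ b) (hc : 0 ≤ c) :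
    0 ≤ vecCons a (vecCons b fun _ : Fin m => c) := by
  simp [Pi.le_def, Fin.forall_fin_succ, ha, hb, hc]

theorem not_isPSupermodular_l1PlusL2 {m : ℕ} {p : ℝ} (hp : 1 ≤ p) (hpm : 60 * p ≤ √m) :
    ¬ IsPSupermodular (l1PlusL2 (n := m + 2)) p := by
  intro hsup
  set t := √(m : ℝ)
  have ht : 0 < t := by linarith
  have hm : (m : ℝ) = t ^ 2 := (sq_sqrt (Nat.cast_nonneg m)).symm
  have hN : ∀ a b : ℝ, 0 ≤ a → 0 ≤ b →
      l1PlusL2 (vecCons a (vecCons b fun _ : Fin m => 1 / t)) =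
        a + b + t + √(a ^ 2 + b ^ 2 + 1) := by
    intro a b ha hb
    rw [l1PlusL2_cons_cons_const ha hb (by positivity), hm]
    field_simp
  let u : Fin (m + 2) → ℝ := vecCons 0 (vecCons 0 fun _ => 1 / t)
  let v : Fin (m + 2) → ℝ := vecCons 1 (vecCons 0 fun _ => 0)
  let w : Fin (m + 2) → ℝ := vecCons 0 (vecCons 1 fun _ => 0)
  have hu : l1PlusL2 u = t + 1 := by
    rw [hN 0 0 le_rfl le_rfl]; norm_num
  have huv : l1PlusL2 (u + v) = t + 1 + √2 := by
    simp only [u, v, cons_cons_const_add, add_zero, zero_add]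
    rw [hN 1 0 zero_le_one le_rfl]; norm_num; ring
  have huw : l1PlusL2 (u + w) = t + 1 + √2 := by
    simp only [u, w, cons_cons_const_add, add_zero, zero_add]
    rw [hN 0 1 le_rfl zero_le_one]; norm_num; ring
  have huvw : l1PlusL2 (u + v + w) = t + 1 + √2 + (1 + √3 - √2) := by
    simp only [u, v, w, cons_cons_const_add, add_zero, zero_add]
    rw [hN 1 1 zero_le_one zero_le_one]; norm_num; ring
  have h := hsup u v w (cons_cons_const_nonneg le_rfl le_rfl (by positivity))
    (cons_cons_const_nonneg zero_le_one le_rfl le_rfl)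
    (cons_cons_const_nonneg le_rfl zero_le_one le_rfl)
  rw [hu, huv, huw, huvw] at h
  have hconvex := rpow_add_rpow_lt_two_mul_rpow hp (by positivity) (sqrt_nonneg 2)
    (by linarith [sqrt_le_sqrt (by norm_num : (2 : ℝ) ≤ 3)])
    (one_add_sqrt_three_sub_sqrt_two_mul_rpow_lt hp hpm)
  linarith

/-- The norm `‖x‖₁ + ‖x‖₂` on ℝⁿ is not `p`-supermodular unless `p = Ω(√n)`. -/
theorem l1_plus_l2_not_pSupermodular :
    ∃ c : ℝ, 0 < c ∧ ∀ n : ℕ, 2 ≤ n → ∀ p : ℝ, 1 ≤ p →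
      IsPSupermodular
        (fun x : Fin n → ℝ => (∑ i, |x i|) + Real.sqrt (∑ i, x i ^ 2)) p →
      c * Real.sqrt n ≤ p := by
  refine ⟨1 / 120, by norm_num, fun n hn p hp hsup => ?_⟩
  by_contra! hlt
  obtain ⟨m, rfl⟩ := Nat.exists_eq_add_of_le' hn
  have hm : 1 ≤ (m : ℝ) := by
    have : (120 : ℝ) < √(m + 2 : ℕ) := by linarith
    rw [lt_sqrt (by norm_num)] at this
    push_cast at this
    linarith
  have hsqrt : √(m + 2 : ℕ) ≤ 2 * √m := by
    rw [show (2 : ℝ) * √m = √(4 * m) by rw [sqrt_mul' _ (Nat.cast_nonneg m)]; norm_num]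
    gcongr
    push_cast
    linarith
  exact not_isPSupermodular_l1PlusL2 hp (by linarith) hsup

end
end

section
/- Let n ≥ 1, let G and G̃ be Orlicz functions, and let α ≥ 0 and γ ≥ 1. Suppose that for all t ≥ 0 with G(t) ≤ 1 we have (i) G(t) ≤ G̃(t) and (ii) G̃(t/γ) ≤ α·G(t) + 1/n. Then for all x ∈ ℝⁿ with nonnegative coordinates, ‖x‖_G ≤ ‖x‖_{G̃} ≤ γ·(α+1)·‖x‖_G. -/
/-!
Both inequalities compare the sets of admissible scales `{a > 0 | ∑ G (xᵢ / a) ≤ 1}`.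

Every scale admissible for `G̃` is admissible for `G`, because `G t ≤ G̃ t` holds whenever
`G̃ t ≤ 1`, not only when `G t ≤ 1`: if `G t > 1`, the intermediate value theorem gives
`u < t` with `G u = 1 ≤ G̃ u`, while convexity and `G̃ 0 = 0` give `G̃ u ≤ (u / t) G̃ t < 1`.

If `a` is admissible for `G`, then by convexity
`∑ G̃ (xᵢ / (γ (α + 1) a)) ≤ (α + 1)⁻¹ ∑ (α G (xᵢ / a) + 1 / n) ≤ 1`,
so `γ (α + 1) a` is admissible for `G̃`.
-/

noncomputable section

open Filter Set
open scoped Topology Pointwise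

theorem IsOrliczFunction.nonneg_s14 {G : ℝ → ℝ} (hG : IsOrliczFunction G) {t : ℝ} (ht : 0 ≤ t) :
    0 ≤ G t :=
  hG.2.2.2.1 ▸ hG.2.2.1 self_mem_Ici ht ht

theorem IsOrliczFunction.map_mul_le {G : ℝ → ℝ} (hG : IsOrliczFunction G) {c s : ℝ}
    (hs : 0 ≤ s) (hc₀ : 0 ≤ c) (hc₁ : c ≤ 1) : G (c * s) ≤ c * G s := by
  simpa [hG.2.2.2.1] using hG.2.1.2 self_mem_Ici hs (sub_nonneg.2 hc₁) hc₀ (by ring)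

theorem IsOrliczFunction.apply_le_of_apply_le_one {G Gt : ℝ → ℝ} (hG : IsOrliczFunction G)
    (hGt : IsOrliczFunction Gt) (h1 : ∀ t : ℝ, 0 ≤ t → G t ≤ 1 → G t ≤ Gt t)
    {s : ℝ} (hs : 0 ≤ s) (hGts : Gt s ≤ 1) : G s ≤ Gt s := by
  by_contra! hlt
  have hGs : 1 < G s := lt_of_not_ge fun hGs ↦ (h1 s hs hGs).not_gt hlt
  obtain ⟨u, ⟨hu₀, hus⟩, hGu⟩ : ∃ u ∈ Icc 0 s, G u = 1 :=
    intermediate_value_Icc hs (hG.1.mono Icc_subset_Ici_self)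
      ⟨hG.2.2.2.1.symm ▸ zero_le_one, hGs.le⟩
  have hus' : u < s := lt_of_le_of_ne hus (by rintro rfl; linarith)
  have hs₀ : 0 < s := hu₀.trans_lt hus'
  have hscale : Gt u ≤ u / s * Gt s := by
    simpa [div_mul_cancel₀ u hs₀.ne'] using
      hGt.map_mul_le hs (div_nonneg hu₀ hs₀.le) ((div_le_one hs₀).2 hus)
  have : u / s * Gt s < 1 :=
    calc u / s * Gt s ≤ u / s * 1 := by gcongr
      _ < 1 := by rw [mul_one, div_lt_one hs₀]; exact hus'
  linarith [h1 u hu₀ hGu.le]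

def orliczScales {ι : Type*} [Fintype ι] (G : ℝ → ℝ) (x : ι → ℝ) : Set ℝ :=
  {a : ℝ | 0 < a ∧ ∑ i, G (x i / a) ≤ 1}

section orliczScales

variable {ι : Type*} [Fintype ι] {G : ℝ → ℝ} {x : ι → ℝ}

theorem bddBelow_orliczScales : BddBelow (orliczScales G x) :=
  ⟨0, fun _ ha ↦ ha.1.le⟩

theorem IsOrliczFunction.orliczScales_nonempty (hG : IsOrliczFunction G) (hx : 0 ≤ x) :
    (orliczScales G x).Nonempty := by
  have hterm (i : ι) : Tendsto (fun a ↦ G (x i / a)) atTop (𝓝 0) := by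
    have hdiv : Tendsto (fun a ↦ x i / a) atTop (𝓝[≥] 0) :=
      tendsto_nhdsWithin_iff.2 ⟨tendsto_const_nhds.div_atTop tendsto_id,
        (eventually_ge_atTop 0).mono fun a ha ↦ div_nonneg (hx i) ha⟩
    have := (hG.1 0 self_mem_Ici).tendsto.comp hdiv
    rwa [hG.2.2.2.1] at this
  have hsum : Tendsto (fun a ↦ ∑ i, G (x i / a)) atTop (𝓝 0) := by
    simpa using tendsto_finsetSum Finset.univ fun i _ ↦ hterm i
  exact ((eventually_gt_atTop 0).and (hsum.eventually (ge_mem_nhds zero_lt_one))).exists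

theorem IsOrliczFunction.apply_le_one_of_mem_orliczScales (hG : IsOrliczFunction G)
    (hx : 0 ≤ x) {a : ℝ} (ha : a ∈ orliczScales G x) (i : ι) : G (x i / a) ≤ 1 :=
  (Finset.single_le_sum (fun j _ ↦ hG.nonneg_s14 (div_nonneg (hx j) ha.1.le))
    (Finset.mem_univ i)).trans ha.2

theorem orliczScales_subset {Gt : ℝ → ℝ} (hG : IsOrliczFunction G) (hGt : IsOrliczFunction Gt)
    (h1 : ∀ t : ℝ, 0 ≤ t → G t ≤ 1 → G t ≤ Gt t) (hx : 0 ≤ x) :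
    orliczScales Gt x ⊆ orliczScales G x := fun _ ha ↦
  ⟨ha.1, (Finset.sum_le_sum fun i _ ↦ hG.apply_le_of_apply_le_one hGt h1
    (div_nonneg (hx i) ha.1.le) (hGt.apply_le_one_of_mem_orliczScales hx ha i)).trans ha.2⟩

theorem mul_mem_orliczScales {Gt : ℝ → ℝ} (hG : IsOrliczFunction G) (hGt : IsOrliczFunction Gt)
    {α γ : ℝ} (hα : 0 ≤ α) (hγ : 0 < γ)
    (h2 : ∀ t : ℝ, 0 ≤ t → G t ≤ 1 → Gt (t / γ) ≤ α * G t + 1 / Fintype.card ι)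
    (hx : 0 ≤ x) {a : ℝ} (ha : a ∈ orliczScales G x) :
    γ * (α + 1) * a ∈ orliczScales Gt x := by
  obtain ⟨ha₀, hsum⟩ := ha
  have hα₁ : 0 < α + 1 := by linarith
  refine ⟨by positivity, ?_⟩
  have hterm (i : ι) :
      Gt (x i / (γ * (α + 1) * a)) ≤ (α + 1)⁻¹ * (α * G (x i / a) + 1 / Fintype.card ι) := by
    have ht : 0 ≤ x i / a := div_nonneg (hx i) ha₀.le
    calc Gt (x i / (γ * (α + 1) * a)) = Gt ((α + 1)⁻¹ * (x i / a / γ)) := by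
          congr 1; field_simp
      _ ≤ (α + 1)⁻¹ * Gt (x i / a / γ) :=
          hGt.map_mul_le (by positivity) (by positivity) (inv_le_one_of_one_le₀ (by linarith))
      _ ≤ _ := by
          gcongr
          exact h2 _ ht (hG.apply_le_one_of_mem_orliczScales hx ⟨ha₀, hsum⟩ i)
  -- `1 / 0 = 0` makes this hold also when `ι` is empty
  have hcard : (Fintype.card ι : ℝ) * (1 / Fintype.card ι) ≤ 1 := by
    rcases eq_or_ne (Fintype.card ι : ℝ) 0 with h | h <;> simp [h]
  calc ∑ i, Gt (x i / (γ * (α + 1) * a))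
      ≤ ∑ i, (α + 1)⁻¹ * (α * G (x i / a) + 1 / Fintype.card ι) :=
        Finset.sum_le_sum fun i _ ↦ hterm i
    _ = (α + 1)⁻¹ * (α * ∑ i, G (x i / a) + Fintype.card ι * (1 / Fintype.card ι)) := by
        rw [← Finset.mul_sum, Finset.sum_add_distrib, ← Finset.mul_sum, Finset.sum_const,
          Finset.card_univ, nsmul_eq_mul]
    _ ≤ (α + 1)⁻¹ * (α * 1 + 1) := by gcongr
    _ = 1 := by field_simp

end orliczScales

theorem orliczNorm_comparison_general {n : ℕ}
    (G Gt : ℝ → ℝ) (hG : IsOrliczFunction G) (hGt : IsOrliczFunction Gt)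
    (α γ : ℝ) (hα : 0 ≤ α) (hγ : 1 ≤ γ)
    (h1 : ∀ t : ℝ, 0 ≤ t → G t ≤ 1 → G t ≤ Gt t)
    (h2 : ∀ t : ℝ, 0 ≤ t → G t ≤ 1 → Gt (t / γ) ≤ α * G t + 1 / n) :
    ∀ x : Fin n → ℝ, 0 ≤ x →
      orliczNorm G x ≤ orliczNorm Gt x ∧
      orliczNorm Gt x ≤ γ * (α + 1) * orliczNorm G x := by
  intro x hx
  have hc : 0 ≤ γ * (α + 1) := by positivity
  have hsmul : (γ * (α + 1)) • orliczScales G x ⊆ orliczScales Gt x := by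
    rintro _ ⟨a, ha, rfl⟩
    exact mul_mem_orliczScales hG hGt hα (by linarith) (by simpa using h2) hx ha
  constructor
  · exact csInf_le_csInf bddBelow_orliczScales (hGt.orliczScales_nonempty hx)
      (orliczScales_subset hG hGt h1 hx)
  · calc orliczNorm Gt x ≤ sInf ((γ * (α + 1)) • orliczScales G x) :=
          csInf_le_csInf bddBelow_orliczScales ((hG.orliczScales_nonempty hx).smul_set) hsmul
      _ = γ * (α + 1) * orliczNorm G x := Real.sInf_smul_of_nonneg hc _

/-- If `G̃ ≥ G` and `G̃(t/γ) ≤ α·G(t) + 1/n` whenever `G(t) ≤ 1`, then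
`‖x‖_G ≤ ‖x‖_{G̃} ≤ γ(α+1)·‖x‖_G` for all nonnegative `x`. -/
theorem orliczNorm_comparison {n : ℕ} (hn : 1 ≤ n)
    (G Gt : ℝ → ℝ) (hG : IsOrliczFunction G) (hGt : IsOrliczFunction Gt)
    (α γ : ℝ) (hα : 0 ≤ α) (hγ : 1 ≤ γ)
    (h1 : ∀ t : ℝ, 0 ≤ t → G t ≤ 1 → G t ≤ Gt t)
    (h2 : ∀ t : ℝ, 0 ≤ t → G t ≤ 1 → Gt (t / γ) ≤ α * G t + 1 / n) :
    ∀ x : Fin n → ℝ, 0 ≤ x →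
      orliczNorm G x ≤ orliczNorm Gt x ∧
      orliczNorm Gt x ≤ γ * (α + 1) * orliczNorm G x :=
  orliczNorm_comparison_general G Gt hG hGt α γ hα hγ h1 h2
end
end
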